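/- arXiv:1711.04872 — 4 statements merged into one kernel-verified Lean document; each statement's English description precedes it below -/
import Mathlib

section
/- Define a sequence (μ_n)_{n≥1} of probability distributions as follows: μ_1 is the point mass at the unique 2-step Dyck path (0,1,0); and μ_{n+1} is the distribution of the path obtained by sampling a path ℓ from μ_n, sampling k uniformly at random from {0, 1, …, 2n} and ε uniformly at random from {insert, lift}, all independently, and applying the move ε at position k to ℓ. Then for every n ≥ 1, μ_n is the uniform distribution on the (finite, nonempty) set of 2n-step Dyck paths. -/
/-- `ℓ : ℕ → ℕ` is a (normalized) `2n`-step Dyck path: `ℓ 0 = 0`, `ℓ j = 0` for every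
`j ≥ 2n` (in particular `ℓ (2n) = 0`), and consecutive values differ by exactly `1`
up to time `2n`. -/
def IsDyckPath (n : ℕ) (ℓ : ℕ → ℕ) : Prop :=
  ℓ 0 = 0 ∧ (∀ j, 2 * n ≤ j → ℓ j = 0) ∧
    ∀ k, k < 2 * n → ℓ (k + 1) = ℓ k + 1 ∨ ℓ k = ℓ (k + 1) + 1

/-- The relation `i ∼_ℓ j` for a `2n`-step Dyck path:
`i, j ≤ 2n` and `ℓ i = ℓ j = min_{min(i,j) ≤ k ≤ max(i,j)} ℓ k`. -/
def DyckRel (n : ℕ) (ℓ : ℕ → ℕ) (i j : ℕ) : Prop :=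
  i ≤ 2 * n ∧ j ≤ 2 * n ∧ ℓ i = ℓ j ∧
    ∀ k, min i j ≤ k → k ≤ max i j → ℓ i ≤ ℓ k

/-- `P` is a set partition of `{0, 1, …, n-1}`, blocks being the elements of `P`. -/
def IsPartitionOf (n : ℕ) (P : Set (Set ℕ)) : Prop :=
  (∀ B ∈ P, B.Nonempty) ∧ (∀ B ∈ P, B ⊆ Set.Iio n) ∧
    ∀ i, i < n → ∃! B, B ∈ P ∧ i ∈ B

/-- A collection of blocks is noncrossing: there are no `a < b < c < d`
with `a, c` in one block and `b, d` in a different block. -/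
def IsNoncrossing (P : Set (Set ℕ)) : Prop :=
  ∀ a b c d : ℕ, a < b → b < c → c < d →
    ∀ B ∈ P, ∀ B' ∈ P, a ∈ B → c ∈ B → b ∈ B' → d ∈ B' → B = B'

/-- `P` is a noncrossing partition of `{0, 1, …, n-1}`. -/
def IsNCPartition (n : ℕ) (P : Set (Set ℕ)) : Prop :=
  IsPartitionOf n P ∧ IsNoncrossing P

/-- `P` is a noncrossing pair partition of `{0, 1, …, n-1}`:
a noncrossing partition all of whose blocks have exactly two elements. -/
def IsNCPairPartition (n : ℕ) (P : Set (Set ℕ)) : Prop :=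
  IsNCPartition n P ∧ ∀ B ∈ P, B.ncard = 2

/-- `Φ(ℓ)`: the set partition of `{0, 1, …, n-1}` whose blocks are the equivalence
classes of `∼_ℓ` among the even indices `0, 2, …, 2n-2`, identifying `2j` with `j`. -/
def dyckEvenClasses (n : ℕ) (ℓ : ℕ → ℕ) : Set (Set ℕ) :=
  {B | ∃ j, j < n ∧ B = {i | i < n ∧ DyckRel n ℓ (2 * i) (2 * j)}}

/-- `Ψ(ℓ)`: the set partition of `{0, 1, …, n-1}` whose blocks are the equivalence
classes of `∼_ℓ` among the odd indices `1, 3, …, 2n-1`, identifying `2j+1` with `j`. -/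
def dyckOddClasses (n : ℕ) (ℓ : ℕ → ℕ) : Set (Set ℕ) :=
  {B | ∃ j, j < n ∧ B = {i | i < n ∧ DyckRel n ℓ (2 * i + 1) (2 * j + 1)}}

/-- The set partition of `{0, 1, …, 2n-1}` whose blocks are the equivalence classes of
`∼_ℓ` among the even indices `0, 2, …, 2n-2` together with the equivalence classes of
`∼_ℓ` among the odd indices `1, 3, …, 2n-1`. -/
def dyckParityClasses (n : ℕ) (ℓ : ℕ → ℕ) : Set (Set ℕ) :=
  {B | ∃ j, j < 2 * n ∧ B = {i | i < 2 * n ∧ i % 2 = j % 2 ∧ DyckRel n ℓ i j}}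

/-- The vertex `ω_n^k = exp(2πik/n)` of the regular `n`-gon. -/
noncomputable def vtx (n k : ℕ) : ℂ :=
  Complex.exp (2 * Real.pi * Complex.I * k / n)

/-- The point `exp(2πis)` of the unit circle. -/
noncomputable def circlePt (s : ℝ) : ℂ :=
  Complex.exp (2 * Real.pi * Complex.I * s)

/-- The closed polygonal set associated with a block `B ⊆ {0, …, n-1}`: the union of the
segments joining cyclically consecutive vertices `ω_n^i`, `i ∈ B` (edges join `i < j` in `B`
with no element of `B` strictly between them, together with the closing edge joining the
minimum and the maximum of `B`; a singleton contributes a single point). -/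
noncomputable def blockPolygon (n : ℕ) (B : Set ℕ) : Set ℂ :=
  ⋃ i ∈ B, ⋃ j ∈ B,
    ⋃ (_ : i ≤ j ∧ ((∀ k ∈ B, ¬(i < k ∧ k < j)) ∨ (∀ k ∈ B, i ≤ k ∧ k ≤ j))),
      segment ℝ (vtx n i) (vtx n j)

/-- The lamination `Λ_n(P) ⊆ ℂ` of a set partition `P` of `{0, …, n-1}`. -/
noncomputable def lamination (n : ℕ) (P : Set (Set ℕ)) : Set ℂ :=
  ⋃ B ∈ P, blockPolygon n B

/-- The insert move at position `k` on a `2n`-step Dyck path: insert one up-step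
followed by one down-step right after time `k`. -/
def insertMove (ℓ : ℕ → ℕ) (k : ℕ) : ℕ → ℕ :=
  fun j => if j ≤ k then ℓ j else if j = k + 1 then ℓ k + 1 else ℓ (j - 2)

/-- `m(ℓ,k)`: the first time after `k` (and at most `2n`) at which the path goes strictly
below its height at time `k`, or `2n+1` if there is no such time. -/
noncomputable def liftTime (n : ℕ) (ℓ : ℕ → ℕ) (k : ℕ) : ℕ :=
  sInf ({j | k < j ∧ j ≤ 2 * n ∧ ℓ j < ℓ k} ∪ {2 * n + 1})

/-- The lift move at position `k` on a `2n`-step Dyck path: lift up by one the part of the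
path between time `k` and time `m(ℓ,k)`. -/
noncomputable def liftMove (n : ℕ) (ℓ : ℕ → ℕ) (k : ℕ) : ℕ → ℕ :=
  fun j => if j ≤ k then ℓ j
    else if j ≤ liftTime n ℓ k then ℓ (j - 1) + 1
    else ℓ (j - 2)

/-- Apply the move `ε ∈ {insert, lift}` (`true` = insert, `false` = lift) at position `k`. -/
noncomputable def applyMove (n : ℕ) (ℓ : ℕ → ℕ) (k : ℕ) (ε : Bool) : ℕ → ℕ :=
  if ε then insertMove ℓ k else liftMove n ℓ k

/-- The halving map sending a `4n`-step Dyck path `ℓ` (with `|ℓ_{2k+2} - ℓ_{2k}| = 2`)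
to the path `(ℓ_0/2, ℓ_2/2, …, ℓ_{4n}/2)`. -/
def halveMap (ℓ : ℕ → ℕ) : ℕ → ℕ := fun j => ℓ (2 * j) / 2

/-- `φ(j) = ⌈j/2⌉ mod n`. -/
def pairPhi (n j : ℕ) : ℕ := ((j + 1) / 2) % n

/-- The edge relation on `{0, …, n-1}`: `x` and `y` are joined whenever `x = φ(a)` and
`y = φ(b)` for some block `{a, b}` of `Q`. -/
def pairRel (n : ℕ) (Q : Set (Set ℕ)) (x y : ℕ) : Prop :=
  ∃ B ∈ Q, ∃ a ∈ B, ∃ b ∈ B, pairPhi n a = x ∧ pairPhi n b = y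

/-- `π(Q)`: the set partition of `{0, …, n-1}` whose blocks are the connected components of
the graph on `{0, …, n-1}` with an edge `{φ(a), φ(b)}` for each block `{a, b}` of `Q`. -/
def pairProj (n : ℕ) (Q : Set (Set ℕ)) : Set (Set ℕ) :=
  {C | ∃ x, x < n ∧ C = {y | Relation.ReflTransGen (pairRel n Q) x y}}

/-- `A` is a lamination of the closed unit disk: a closed subset of the disk which is a union
of chords (segments with endpoints on the unit circle, possibly degenerate) whose
intersections with the open unit disk are pairwise disjoint. -/
def IsLamination (A : Set ℂ) : Prop :=
  IsClosed A ∧ A ⊆ Metric.closedBall (0 : ℂ) 1 ∧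
    ∃ C : Set (ℂ × ℂ),
      (∀ p ∈ C, ‖p.1‖ = 1 ∧ ‖p.2‖ = 1) ∧
      A = ⋃ p ∈ C, segment ℝ p.1 p.2 ∧
      ∀ p ∈ C, ∀ q ∈ C, segment ℝ p.1 p.2 ≠ segment ℝ q.1 q.2 →
        Disjoint (segment ℝ p.1 p.2 ∩ Metric.ball (0 : ℂ) 1)
          (segment ℝ q.1 q.2 ∩ Metric.ball (0 : ℂ) 1)

/-- `s ∼_f t`: `f s = f t = min_{min(s,t) ≤ r ≤ max(s,t)} f r`. -/
def simRel (f : ℝ → ℝ) (s t : ℝ) : Prop :=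
  f s = f t ∧ ∀ r, min s t ≤ r → r ≤ max s t → f s ≤ f r

/-- `L(f)`: the union of the chords `[exp(2πis), exp(2πit)]` over all `s ∼_f t`
in `[0,1]`. -/
noncomputable def brownLam (f : ℝ → ℝ) : Set ℂ :=
  ⋃ s ∈ Set.Icc (0 : ℝ) 1, ⋃ t ∈ Set.Icc (0 : ℝ) 1, ⋃ (_ : simRel f s t),
    segment ℝ (circlePt s) (circlePt t)

namespace Marchal

/-- weak step bounds, valid for every index -/
lemma step_le {n : ℕ} {ℓ : ℕ → ℕ} (h : IsDyckPath n ℓ) (k : ℕ) :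
    ℓ (k+1) ≤ ℓ k + 1 ∧ ℓ k ≤ ℓ (k+1) + 1 := by
  rcases lt_or_ge k (2*n) with hk | hk
  · rcases h.2.2 k hk with h1 | h1 <;> omega
  · have h1 := h.2.1 k hk
    have h2 := h.2.1 (k+1) (by omega)
    omega

lemma zigzag_dyck (n : ℕ) : IsDyckPath n (fun j => if j < 2*n then j % 2 else 0) := by
  refine ⟨by simp, fun j hj => by simp [Nat.not_lt.mpr hj], fun k hk => ?_⟩
  rcases Nat.lt_or_ge (k+1) (2*n) with h | h
  · simp only [if_pos hk, if_pos h]; omega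
  · have hk1 : k + 1 = 2*n := by omega
    have hko : k % 2 = 1 := by omega
    simp only [if_pos hk, if_neg (by omega : ¬ (k+1 < 2*n))]; omega

section liftTime
variable {n k m : ℕ} {ℓ : ℕ → ℕ}

lemma liftTime_spec (h : IsDyckPath n ℓ) (hk : k ≤ 2*n) (hm : liftTime n ℓ k = m) :
    k < m ∧ m ≤ 2*n+1 ∧
    (∀ j, k < j → j < m → ℓ k ≤ ℓ j) ∧
    (m ≤ 2*n → ℓ m + 1 = ℓ k) ∧
    (m = 2*n+1 → ℓ k = 0) := by
  have hmem : m ∈ {j | k < j ∧ j ≤ 2 * n ∧ ℓ j < ℓ k} ∪ {2 * n + 1} := by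
    rw [← hm]; exact Nat.sInf_mem ⟨2*n+1, Or.inr rfl⟩
  have hmin : ∀ j, j < m → ¬ (k < j ∧ j ≤ 2 * n ∧ ℓ j < ℓ k) := by
    intro j hj hc
    have : liftTime n ℓ k ≤ j := Nat.sInf_le (Or.inl hc)
    omega
  have hle : m ≤ 2*n+1 := by
    rcases hmem with h' | h'
    · exact le_trans h'.2.1 (by omega)
    · exact le_of_eq h'
  have hlt : k < m := by
    rcases hmem with h' | h'
    · exact h'.1
    · simp only [Set.mem_singleton_iff] at h'; omega
  have hmin' : ∀ j, k < j → j < m → ℓ k ≤ ℓ j := by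
    intro j h1 h2
    have := hmin j h2
    omega
  refine ⟨hlt, hle, hmin', ?_, ?_⟩
  · intro hm2
    have hmem' : ℓ m < ℓ k := by
      rcases hmem with h' | h'
      · exact h'.2.2
      · simp only [Set.mem_singleton_iff] at h'; omega
    obtain ⟨s, hs⟩ : ∃ s, m = s + 1 := ⟨m - 1, by omega⟩
    have hsk : ℓ k ≤ ℓ s := by
      rcases Nat.eq_or_lt_of_le (Nat.succ_le_iff.mpr hlt) with h' | h'
      · have hks : k = s := by omega
        rw [hks]
      · exact hmin' s (by omega) (by omega)
    have := step_le h s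
    rw [hs] at hmem' ⊢
    omega
  · intro hm2
    rcases Nat.eq_or_lt_of_le hk with h' | h'
    · rw [h']; exact h.2.1 _ (le_refl _)
    · have h1 := hmin' (2*n) h' (by omega)
      have h2 := h.2.1 (2*n) (le_refl _)
      omega

end liftTime

section forward
variable {n k : ℕ} {ℓ : ℕ → ℕ}

lemma insert_dyck (h : IsDyckPath n ℓ) (hk : k ≤ 2*n) :
    IsDyckPath (n+1) (insertMove ℓ k) := by
  obtain ⟨h0, hend, hstep⟩ := h
  refine ⟨by simp [insertMove, h0], ?_, ?_⟩
  · intro j hj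
    have hj1 : ¬ j ≤ k := by omega
    have hj2 : j ≠ k + 1 := by omega
    simp only [insertMove, if_neg hj1, if_neg hj2]
    exact hend _ (by omega)
  · intro p hp
    rcases Nat.lt_or_ge (p+1) (k+1) with h1 | h1
    · -- p + 1 ≤ k
      have e1 : insertMove ℓ k p = ℓ p := by simp [insertMove]; omega
      have e2 : insertMove ℓ k (p+1) = ℓ (p+1) := by simp [insertMove]; omega
      rw [e1, e2]; exact hstep p (by omega)
    rcases Nat.eq_or_lt_of_le h1 with h2 | h2
    · -- p = k
      have hpk : p = k := by omega
      have e1 : insertMove ℓ k p = ℓ k := by simp [insertMove, hpk]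
      have e2 : insertMove ℓ k (p+1) = ℓ k + 1 := by
        simp only [insertMove, if_neg (by omega : ¬ p + 1 ≤ k), if_pos (by omega : p+1 = k+1)]
      rw [e1, e2]; left; rfl
    rcases Nat.eq_or_lt_of_le h2 with h3 | h3
    · -- p = k+1
      have e1 : insertMove ℓ k p = ℓ k + 1 := by
        simp only [insertMove, if_neg (by omega : ¬ p ≤ k), if_pos (by omega : p = k+1)]
      have e2 : insertMove ℓ k (p+1) = ℓ k := by
        simp only [insertMove, if_neg (by omega : ¬ p + 1 ≤ k), if_neg (by omega : ¬ p+1 = k+1)]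
        congr 1 <;> omega
      rw [e1, e2]; right; rfl
    · -- p ≥ k+2
      have e1 : insertMove ℓ k p = ℓ (p-2) := by
        simp only [insertMove, if_neg (by omega : ¬ p ≤ k), if_neg (by omega : ¬ p = k+1)]
      have e2 : insertMove ℓ k (p+1) = ℓ (p-1) := by
        simp only [insertMove, if_neg (by omega : ¬ p + 1 ≤ k), if_neg (by omega : ¬ p+1 = k+1)]
        congr 1 <;> omega
      rw [e1, e2]
      have : p - 1 = (p-2) + 1 := by omega
      rw [this]
      exact hstep (p-2) (by omega)

lemma lift_dyck (h : IsDyckPath n ℓ) (hk : k ≤ 2*n) :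
    IsDyckPath (n+1) (liftMove n ℓ k) := by
  obtain ⟨hlt, hle, hmin, hbot, htop⟩ := liftTime_spec h hk rfl
  obtain ⟨h0, hend, hstep⟩ := h
  set m := liftTime n ℓ k with hm
  refine ⟨by simp [liftMove, h0], ?_, ?_⟩
  · intro j hj
    have e : liftMove n ℓ k j = ℓ (j-2) := by
      simp only [liftMove, ← hm, if_neg (by omega : ¬ j ≤ k), if_neg (by omega : ¬ j ≤ m)]
    rw [e]; exact hend _ (by omega)
  · intro p hp
    rcases Nat.lt_or_ge (p+1) (k+1) with h1 | h1
    · have e1 : liftMove n ℓ k p = ℓ p := by simp only [liftMove, if_pos (by omega : p ≤ k)]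
      have e2 : liftMove n ℓ k (p+1) = ℓ (p+1) := by
        simp only [liftMove, if_pos (by omega : p+1 ≤ k)]
      rw [e1, e2]; exact hstep p (by omega)
    rcases Nat.eq_or_lt_of_le h1 with h2 | h2
    · have hpk : p = k := by omega
      have e1 : liftMove n ℓ k p = ℓ k := by rw [hpk]; simp [liftMove]
      have e2 : liftMove n ℓ k (p+1) = ℓ k + 1 := by
        simp only [liftMove, ← hm, if_neg (by omega : ¬ p+1 ≤ k), if_pos (by omega : p+1 ≤ m)]
        simp [hpk]
      rw [e1, e2]; left; rfl
    rcases Nat.lt_or_ge p m with h3 | h3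
    · -- k < p < m, step within lifted region; p+1 ≤ m
      obtain ⟨q, rfl⟩ : ∃ q, p = q + 1 := ⟨p - 1, by omega⟩
      have e1 : liftMove n ℓ k (q+1) = ℓ q + 1 := by
        simp only [liftMove, ← hm, if_neg (by omega : ¬ q+1 ≤ k), if_pos (by omega : q+1 ≤ m)]
        simp
      have e2 : liftMove n ℓ k (q+1+1) = ℓ (q+1) + 1 := by
        simp only [liftMove, ← hm, if_neg (by omega : ¬ q+1+1 ≤ k), if_pos (by omega : q+1+1 ≤ m)]
        simp
      rw [e1, e2]
      rcases hstep q (by omega) with h' | h' <;> omega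
    rcases Nat.eq_or_lt_of_le h3 with h4 | h4
    · -- p = m
      have e1 : liftMove n ℓ k p = ℓ (p-1) + 1 := by
        simp only [liftMove, ← hm, if_neg (by omega : ¬ p ≤ k), if_pos (by omega : p ≤ m)]
      have e2 : liftMove n ℓ k (p+1) = ℓ (p-1) := by
        simp only [liftMove, ← hm, if_neg (by omega : ¬ p+1 ≤ k), if_neg (by omega : ¬ p+1 ≤ m)]
        congr 1 <;> omega
      rw [e1, e2]; right; rfl
    · -- p > m
      have e1 : liftMove n ℓ k p = ℓ (p-2) := by
        simp only [liftMove, ← hm, if_neg (by omega : ¬ p ≤ k), if_neg (by omega : ¬ p ≤ m)]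
      have e2 : liftMove n ℓ k (p+1) = ℓ (p-1) := by
        simp only [liftMove, ← hm, if_neg (by omega : ¬ p+1 ≤ k), if_neg (by omega : ¬ p+1 ≤ m)]
        congr 1 <;> omega
      rw [e1, e2]
      have : p - 1 = (p-2) + 1 := by omega
      rw [this]
      exact hstep (p-2) (by omega)

end forward


/-- first return time: least `j > k` with `L j ≤ L k` -/
noncomputable def ret (L : ℕ → ℕ) (k : ℕ) : ℕ := sInf {j | k < j ∧ L j ≤ L k}

section ret
variable {n k t : ℕ} {L : ℕ → ℕ}

lemma ret_eq_of (hmem : k < t ∧ L t ≤ L k) (hmin : ∀ j, k < j → L j ≤ L k → t ≤ j) :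
    ret L k = t :=
  le_antisymm (Nat.sInf_le hmem) (le_csInf ⟨t, hmem⟩ (fun j hj => hmin j hj.1 hj.2))

lemma ret_spec (hL : IsDyckPath (n+1) L) (hk : k ≤ 2*n) (hup : L (k+1) = L k + 1)
    (ht : ret L k = t) :
    k + 2 ≤ t ∧ t ≤ 2*n+2 ∧ L t = L k ∧ ∀ j, k < j → j < t → L k < L j := by
  have hne : 2*(n+1) ∈ {j | k < j ∧ L j ≤ L k} :=
    ⟨by omega, by rw [hL.2.1 _ (le_refl _)]; omega⟩
  have hmem : (k < t ∧ L t ≤ L k) := by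
    rw [← ht]; exact Nat.sInf_mem ⟨2*(n+1), hne⟩
  have hle : t ≤ 2*n+2 := by
    have h5 : ret L k ≤ 2*(n+1) := Nat.sInf_le hne
    omega
  have hmin : ∀ j, k < j → j < t → L k < L j := by
    intro j h1 h2
    by_contra hc
    have : ret L k ≤ j := Nat.sInf_le ⟨h1, by omega⟩
    omega
  have ht2 : k + 2 ≤ t := by
    rcases Nat.eq_or_lt_of_le (Nat.succ_le_iff.mpr hmem.1) with h' | h'
    · rw [← h'] at hmem
      simp only [Nat.succ_eq_add_one] at hmem
      omega
    · omega
  obtain ⟨s, hs⟩ : ∃ s, t = s + 1 := ⟨t - 1, by omega⟩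
  have hsk : L k < L s := hmin s (by omega) (by omega)
  have hstep := step_le hL s
  refine ⟨ht2, hle, ?_, hmin⟩
  rw [hs] at hmem ⊢
  omega

end ret

section insertChar
variable {n k : ℕ} {ℓ L : ℕ → ℕ}

lemma insert_uniq (h : insertMove ℓ k = L) :
    ℓ = fun j => if j ≤ k then L j else L (j+2) := by
  funext j
  rcases le_or_gt j k with hj | hj
  · rw [← h]; simp [insertMove, hj]
  · rw [← h]
    simp only [insertMove, if_neg (by omega : ¬ j + 2 ≤ k), if_neg (by omega : ¬ j + 2 = k + 1),
      if_neg (by omega : ¬ j ≤ k)]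
    congr 1 <;> omega

lemma insert_fwd (h : insertMove ℓ k = L) :
    L (k+1) = L k + 1 ∧ L (k+2) = L k := by
  rw [← h]
  constructor
  · simp only [insertMove, if_neg (by omega : ¬ k + 1 ≤ k), if_pos rfl, if_pos (le_refl k)]
    simp
  · simp only [insertMove, if_neg (by omega : ¬ k + 2 ≤ k), if_neg (by omega : ¬ k+2 = k+1),
      if_pos (le_refl k)]
    congr 1 <;> omega

lemma insert_bwd (hL : IsDyckPath (n+1) L) (hk : k ≤ 2*n)
    (h1 : L (k+1) = L k + 1) (h2 : L (k+2) = L k) :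
    IsDyckPath n (fun j => if j ≤ k then L j else L (j+2)) ∧
      insertMove (fun j => if j ≤ k then L j else L (j+2)) k = L := by
  obtain ⟨h0, hend, hstep⟩ := hL
  set ℓ : ℕ → ℕ := fun j => if j ≤ k then L j else L (j+2) with hℓ
  have hD : IsDyckPath n ℓ := by
    refine ⟨by simp [hℓ, h0], ?_, ?_⟩
    · intro j hj
      rcases le_or_gt j k with hjk | hjk
      · have hj' : j = 2*n := by omega
        have hk' : k = 2*n := by omega
        simp only [hℓ, if_pos hjk]
        rw [hj', ← hk', ← h2]
        exact hend _ (by omega)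
      · simp only [hℓ, if_neg (by omega : ¬ j ≤ k)]
        exact hend _ (by omega)
    · intro p hp
      rcases Nat.lt_or_ge p k with hpk | hpk
      · simp only [hℓ, if_pos (by omega : p ≤ k), if_pos (by omega : p + 1 ≤ k)]
        exact hstep p (by omega)
      rcases Nat.eq_or_lt_of_le hpk with hpk' | hpk'
      · simp only [hℓ, if_pos (by omega : p ≤ k), if_neg (by omega : ¬ p + 1 ≤ k)]
        rw [hpk'] at h1 h2
        have := hstep (p+2) (by omega)
        have e : p+1+2 = p+2+1 := by omega
        rw [e]
        omega
      · simp only [hℓ, if_neg (by omega : ¬ p ≤ k), if_neg (by omega : ¬ p + 1 ≤ k)]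
        have := hstep (p+2) (by omega)
        have e : p + 1 + 2 = p + 2 + 1 := by omega
        rw [e]
        exact this
  refine ⟨hD, ?_⟩
  funext j
  rcases le_or_gt j k with hj | hj
  · simp [insertMove, hℓ, hj]
  rcases Nat.eq_or_lt_of_le (Nat.succ_le_iff.mpr hj) with hj' | hj'
  · simp only [insertMove, if_neg (by omega : ¬ j ≤ k), if_pos (by omega : j = k+1), hℓ,
      if_pos (le_refl k)]
    rw [← hj']
    simp only [Nat.succ_eq_add_one]
    omega
  · have e : j = (j - 2) + 2 := by omega
    simp only [insertMove, if_neg (by omega : ¬ j ≤ k), if_neg (by omega : ¬ j = k+1), hℓ]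
    rcases Nat.lt_or_ge (j-2) (k+1) with h' | h'
    · have : j - 2 = k := by omega
      rw [if_pos (by omega : j - 2 ≤ k), this, ← h2]
      congr 1 <;> omega
    · rw [if_neg (by omega : ¬ j - 2 ≤ k)]
      congr 1 <;> omega

end insertChar

/-- candidate preimage of the lift move -/
noncomputable def liftPre (L : ℕ → ℕ) (k t : ℕ) : ℕ → ℕ :=
  fun j => if j ≤ k then L j else if j + 1 ≤ t then L (j+1) - 1 else L (j+2)

section liftChar
variable {n k t : ℕ} {ℓ L : ℕ → ℕ}

lemma ret_lift (hℓ : IsDyckPath n ℓ) (hk : k ≤ 2*n) :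
    ret (liftMove n ℓ k) k = liftTime n ℓ k + 1 := by
  obtain ⟨hlt, hle, hmin, hbot, htop⟩ := liftTime_spec hℓ hk rfl
  set m := liftTime n ℓ k with hm
  have hm1 : ℓ (m-1) = ℓ k := by
    rcases Nat.eq_or_lt_of_le (Nat.succ_le_iff.mpr hlt) with h' | h'
    · have : m - 1 = k := by omega
      rw [this]
    · have h1 := hmin (m-1) (by omega) (by omega)
      rcases Nat.eq_or_lt_of_le hle with h2 | h2
      · have := hℓ.2.1 (m-1) (by omega)
        have := htop h2
        omega
      · have h3 := hbot (by omega)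
        obtain ⟨s, hs⟩ : ∃ s, m = s + 1 := ⟨m - 1, by omega⟩
        have h4 := step_le hℓ s
        rw [hs] at h3 h1 ⊢
        simp only [Nat.add_sub_cancel] at h1 ⊢
        omega
  have e1 : liftMove n ℓ k (m+1) = ℓ (m-1) := by
    simp only [liftMove, ← hm, if_neg (by omega : ¬ m+1 ≤ k), if_neg (by omega : ¬ m+1 ≤ m)]
    congr 1 <;> omega
  have e0 : liftMove n ℓ k k = ℓ k := by simp [liftMove]
  apply ret_eq_of
  · refine ⟨by omega, ?_⟩
    rw [e1, e0, hm1]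
  · intro j hj hj'
    by_contra hc
    have hjm : j ≤ m := by omega
    have ej : liftMove n ℓ k j = ℓ (j-1) + 1 := by
      simp only [liftMove, ← hm, if_neg (by omega : ¬ j ≤ k), if_pos hjm]
    have hj1 : ℓ k ≤ ℓ (j-1) := by
      rcases Nat.eq_or_lt_of_le (Nat.succ_le_iff.mpr hj) with h' | h'
      · have : j - 1 = k := by omega
        rw [this]
      · exact hmin (j-1) (by omega) (by omega)
    rw [ej, e0] at hj'
    omega

lemma lift_fwd (hℓ : IsDyckPath n ℓ) (hk : k ≤ 2*n) :
    (liftMove n ℓ k (k+1) = liftMove n ℓ k k + 1 ∧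
      (ret (liftMove n ℓ k) k = 2*n+2 ∨
        liftMove n ℓ k (ret (liftMove n ℓ k) k)
          = liftMove n ℓ k (ret (liftMove n ℓ k) k + 1) + 1)) ∧
    ℓ = liftPre (liftMove n ℓ k) k (ret (liftMove n ℓ k) k) := by
  obtain ⟨hlt, hle, hmin, hbot, htop⟩ := liftTime_spec hℓ hk rfl
  set m := liftTime n ℓ k with hm
  set L := liftMove n ℓ k with hLdef
  have hret : ret L k = m + 1 := ret_lift hℓ hk
  have e0 : L k = ℓ k := by simp [hLdef, liftMove]
  have emid : ∀ j, k < j → j ≤ m → L j = ℓ (j-1) + 1 := by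
    intro j h1 h2
    simp only [hLdef, liftMove, ← hm, if_neg (by omega : ¬ j ≤ k), if_pos h2]
  have ehi : ∀ j, m < j → L j = ℓ (j-2) := by
    intro j h1
    simp only [hLdef, liftMove, ← hm, if_neg (by omega : ¬ j ≤ k), if_neg (by omega : ¬ j ≤ m)]
  have hm1 : ℓ (m-1) = ℓ k := by
    rcases Nat.eq_or_lt_of_le (Nat.succ_le_iff.mpr hlt) with h' | h'
    · have : m - 1 = k := by omega
      rw [this]
    · have h1 := hmin (m-1) (by omega) (by omega)
      rcases Nat.eq_or_lt_of_le hle with h2 | h2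
      · have := hℓ.2.1 (m-1) (by omega)
        have := htop h2
        omega
      · have h3 := hbot (by omega)
        obtain ⟨s, hs⟩ : ∃ s, m = s + 1 := ⟨m - 1, by omega⟩
        have h4 := step_le hℓ s
        rw [hs] at h3 h1 ⊢
        simp only [Nat.add_sub_cancel] at h1 ⊢
        omega
  refine ⟨⟨?_, ?_⟩, ?_⟩
  · rw [emid (k+1) (by omega) (by omega), e0]
    simp
  · rcases Nat.eq_or_lt_of_le hle with h2 | h2
    · left; omega
    · right
      rw [hret]
      have ha : L (m+1) = ℓ (m-1) := by rw [ehi (m+1) (by omega)]; congr 1 <;> omega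
      have hb : L (m+1+1) = ℓ m := by rw [ehi (m+1+1) (by omega)]; congr 1 <;> omega
      rw [ha, hb, hm1]
      have := hbot (by omega)
      omega
  · funext j
    rw [hret]
    simp only [liftPre]
    rcases le_or_gt j k with hj | hj
    · rw [if_pos hj]
      simp [hLdef, liftMove, hj]
    rcases le_or_gt (j+1) (m+1) with hj2 | hj2
    · rw [if_neg (by omega : ¬ j ≤ k), if_pos hj2]
      rcases Nat.eq_or_lt_of_le hj2 with h' | h'
      · have hjm : j = m := by omega
        have ha : L (j+1) = ℓ (m-1) := by rw [ehi (j+1) (by omega)]; congr 1 <;> omega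
        rw [ha, hm1, hjm]
        rcases Nat.eq_or_lt_of_le hle with h2 | h2
        · have hz1 : ℓ m = 0 := hℓ.2.1 m (by omega)
          have hz2 : ℓ k = 0 := htop h2
          omega
        · have := hbot (by omega)
          omega
      · have ha : L (j+1) = ℓ j + 1 := by
          rw [emid (j+1) (by omega) (by omega)]
          simp
        rw [ha]
        simp
    · rw [if_neg (by omega : ¬ j ≤ k), if_neg (by omega : ¬ j + 1 ≤ m + 1)]
      rw [ehi (j+2) (by omega)]
      congr 1 <;> omega

end liftChar

section liftBwd
variable {n k t : ℕ} {ℓ L : ℕ → ℕ}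

lemma liftTime_eq_of {m' : ℕ}
    (hmem : m' ∈ ({j | k < j ∧ j ≤ 2*n ∧ ℓ j < ℓ k} ∪ {2*n+1} : Set ℕ))
    (hmin : ∀ j, k < j → j ≤ 2*n → ℓ j < ℓ k → m' ≤ j) (hm' : m' ≤ 2*n+1) :
    liftTime n ℓ k = m' := by
  refine le_antisymm (Nat.sInf_le hmem) (le_csInf ⟨_, hmem⟩ (fun j hj => ?_))
  rcases hj with hj | hj
  · exact hmin j hj.1 hj.2.1 hj.2.2
  · simp only [Set.mem_singleton_iff] at hj
    omega

lemma lift_bwd (hL : IsDyckPath (n+1) L) (hk : k ≤ 2*n) (hup : L (k+1) = L k + 1)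
    (ht : ret L k = t)
    (hcond : t = 2*n+2 ∨ L t = L (t + 1) + 1) :
    IsDyckPath n (liftPre L k t) ∧ liftMove n (liftPre L k t) k = L := by
  obtain ⟨ht2, hle, hLt, hmin⟩ := ret_spec hL hk hup ht
  have hpos : t ≤ 2*n+1 → 1 ≤ L k := by
    intro h'
    rcases hcond with h'' | h''
    · omega
    · omega
  have eP0 : ∀ j, j ≤ k → liftPre L k t j = L j := fun j hj => if_pos hj
  have ePm : ∀ j, k < j → j+1 ≤ t → liftPre L k t j = L (j+1) - 1 := by
    intro j h1 h2
    simp only [liftPre, if_neg (by omega : ¬ j ≤ k), if_pos h2]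
  have ePh : ∀ j, k < j → t < j+1 → liftPre L k t j = L (j+2) := by
    intro j h1 h2
    simp only [liftPre, if_neg (by omega : ¬ j ≤ k), if_neg (by omega : ¬ j + 1 ≤ t)]
  have hz : L (2*n+2) = 0 := hL.2.1 _ (le_refl _)
  have hDyck : IsDyckPath n (liftPre L k t) := by
    refine ⟨by rw [eP0 0 (by omega)]; exact hL.1, ?_, ?_⟩
    · -- end values
      intro j hj
      rcases le_or_gt j k with hjk | hjk
      · have hjx : j = k := by omega
        have hkx : k = 2*n := by omega
        have htx : t = 2*n+2 := by omega
        rw [eP0 j hjk, hjx, ← hLt, htx, hz]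
      rcases le_or_gt (j+1) t with hjt | hjt
      · rw [ePm j hjk hjt]
        rcases Nat.eq_or_lt_of_le (by omega : 2*n ≤ j) with h' | h'
        · -- j = 2n
          have h5 := (step_le hL (2*n+1)).2
          have e2 : 2*n+1+1 = 2*n+2 := by omega
          rw [e2, hz] at h5
          rw [← h']
          omega
        · -- j + 1 = 2n+2
          have : j + 1 = 2*n+2 := by omega
          rw [this, hz]
      · rw [ePh j hjk hjt]
        exact hL.2.1 _ (by omega)
    · -- steps
      intro p hp
      have hstepL := hL.2.2
      rcases le_or_gt (p+1) k with h1 | h1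
      · rw [eP0 p (by omega), eP0 (p+1) h1]
        exact hstepL p (by omega)
      rcases Nat.eq_or_lt_of_le (by omega : k ≤ p) with h2 | h2
      · -- p = k
        subst h2
        rw [eP0 k (le_refl k), ePm (k+1) (by omega) (by omega)]
        rcases Nat.eq_or_lt_of_le ht2 with h3 | h3
        · -- t = k + 2
          have h4 : L (k+1+1) = L k := by rw [(by omega : k+1+1 = t), hLt]
          have h5 := hpos (by omega)
          omega
        · -- k + 2 < t
          have h4 : L k < L (k+1+1) := hmin (k+1+1) (by omega) (by omega)
          have h6 := hstepL (k+1) (by omega)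
          omega
      rcases le_or_gt (p+2) t with h3 | h3
      · rcases Nat.eq_or_lt_of_le h3 with h4 | h4
        · -- p + 2 = t
          rw [ePm p h2 (by omega), ePm (p+1) (by omega) (by omega)]
          have h5 : L k < L (p+1) := hmin (p+1) (by omega) (by omega)
          have h6 : L (p+1+1) = L k := by rw [h4, hLt]
          have h7 := hstepL (p+1) (by omega)
          have h8 := hpos (by omega)
          omega
        · -- p + 2 < t
          rw [ePm p h2 (by omega), ePm (p+1) (by omega) (by omega)]
          have h5 : L k < L (p+1) := hmin (p+1) (by omega) (by omega)
          have h6 : L k < L (p+1+1) := hmin (p+1+1) (by omega) (by omega)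
          have h7 := hstepL (p+1) (by omega)
          omega
      rcases Nat.eq_or_lt_of_le (by omega : t ≤ p + 1) with h4 | h4
      · -- p + 1 = t
        rw [ePm p h2 (by omega), ePh (p+1) (by omega) (by omega)]
        have h5 : t ≤ 2*n := by omega
        have h6 : L t = L (t+1) + 1 := by
          rcases hcond with h' | h'
          · omega
          · exact h'
        have h7 := hstepL (t+1) (by omega)
        have h8 := hpos (by omega)
        have e2 : p + 1 + 2 = t + 1 + 1 := by omega
        rw [e2, ← h4]
        omega
      · -- t ≤ p
        rw [ePh p h2 (by omega), ePh (p+1) (by omega) (by omega)]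
        have h7 := hstepL (p+2) (by omega)
        have e : p + 1 + 2 = p + 2 + 1 := by omega
        rw [e]
        exact h7
  refine ⟨hDyck, ?_⟩
  have hmt : liftTime n (liftPre L k t) k = t - 1 := by
    have eℓk : liftPre L k t k = L k := eP0 k (le_refl k)
    rcases Nat.eq_or_lt_of_le hle with h' | h'
    · -- t = 2n+2 : liftTime = 2n+1
      have e : t - 1 = 2*n+1 := by omega
      rw [e]
      apply liftTime_eq_of (m' := 2*n+1)
      · right; simp only [Set.mem_singleton_iff]
      · intro j hj1 hj2 hj3
        exfalso
        rw [ePm j hj1 (by omega), eℓk] at hj3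
        have h5 : L k < L (j+1) := hmin (j+1) (by omega) (by omega)
        omega
      · omega
    · -- t ≤ 2n+1
      have h8 := hpos (by omega)
      apply liftTime_eq_of (m' := t - 1)
      · left
        refine ⟨by omega, by omega, ?_⟩
        rw [ePm (t-1) (by omega) (by omega), eℓk]
        have e : t - 1 + 1 = t := by omega
        rw [e, hLt]
        omega
      · intro j hj1 hj2 hj3
        by_contra hc
        rw [ePm j hj1 (by omega), eℓk] at hj3
        have h5 : L k < L (j+1) := hmin (j+1) (by omega) (by omega)
        omega
      · omega
  funext j
  rcases le_or_gt j k with hj | hj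
  · simp only [liftMove, if_pos hj]
    exact eP0 j hj
  simp only [liftMove, if_neg (by omega : ¬ j ≤ k), hmt]
  rcases le_or_gt j (t-1) with hj2 | hj2
  · rw [if_pos hj2]
    obtain ⟨q, rfl⟩ : ∃ q, j = q + 1 := ⟨j - 1, by omega⟩
    simp only [Nat.add_sub_cancel]
    rcases Nat.eq_or_lt_of_le (by omega : k ≤ q) with h' | h'
    · rw [eP0 q (by omega), ← h', hup]
    · rw [ePm q h' (by omega)]
      have h5 : L k < L (q+1) := hmin (q+1) (by omega) (by omega)
      omega
  · rw [if_neg (by omega : ¬ j ≤ t - 1)]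
    rcases Nat.eq_or_lt_of_le (by omega : t ≤ j) with h' | h'
    · -- j = t
      rcases Nat.eq_or_lt_of_le (by omega : k + 2 ≤ t) with h'' | h''
      · rw [(by omega : j - 2 = k), eP0 k (le_refl k), ← h', hLt]
      · rw [ePm (j-2) (by omega) (by omega)]
        have e : j - 2 + 1 = t - 1 := by omega
        rw [e]
        have h5 : L k < L (t-1) := hmin (t-1) (by omega) (by omega)
        obtain ⟨s, hs⟩ : ∃ s, t = s + 1 := ⟨t - 1, by omega⟩
        have h6 := step_le hL s
        rw [← h', hs]
        simp only [Nat.add_sub_cancel]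
        rw [hs] at h5 hLt
        simp only [Nat.add_sub_cancel] at h5
        omega
    rcases Nat.eq_or_lt_of_le (by omega : t + 1 ≤ j) with h'' | h''
    · -- j = t + 1
      rw [ePm (j-2) (by omega) (by omega)]
      have e : j - 2 + 1 = t := by omega
      rw [e, ← h'']
      rcases hcond with h3 | h3
      · have hz2 : L (2*n+2+1) = 0 := hL.2.1 _ (by omega)
        rw [h3, hz, hz2]
      · omega
    · -- j ≥ t + 2
      rw [ePh (j-2) (by omega) (by omega)]
      congr 1 <;> omega

end liftBwd

/-- validity of the insert move producing `L` -/
def InsOk (L : ℕ → ℕ) (k : ℕ) : Prop := L (k+1) = L k + 1 ∧ L (k+2) = L k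

/-- validity of the lift move producing `L` -/
def LiftOk (n : ℕ) (L : ℕ → ℕ) (k : ℕ) : Prop :=
  L (k+1) = L k + 1 ∧ (ret L k = 2*n+2 ∨ L (ret L k) = L (ret L k + 1) + 1)

noncomputable instance {L : ℕ → ℕ} {k : ℕ} : Decidable (InsOk L k) := by
  unfold InsOk; infer_instance

noncomputable instance {n : ℕ} {L : ℕ → ℕ} {k : ℕ} : Decidable (LiftOk n L k) := by
  unfold LiftOk; infer_instance

section count
variable {n k : ℕ} {L : ℕ → ℕ}

lemma down_invariant {m : ℕ} (h : IsDyckPath m L) :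
    ∀ j, j ≤ 2*m → j = L j + 2 * ((Finset.range j).filter (fun q => L (q+1) + 1 = L q)).card := by
  intro j
  induction j with
  | zero => simp [h.1]
  | succ j ih =>
    intro hj
    have ih' := ih (by omega)
    rw [Finset.range_add_one, Finset.filter_insert]
    rcases h.2.2 j (by omega) with hs | hs
    · rw [if_neg (by omega)]
      omega
    · rw [if_pos (by omega), Finset.card_insert_of_notMem (by simp)]
      omega

lemma down_count (h : IsDyckPath (n+1) L) :
    ((Finset.range (2*n+2)).filter (fun q => L (q+1) + 1 = L q)).card = n + 1 := by
  have h1 := down_invariant h (2*(n+1)) (le_refl _)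
  have h2 : L (2*(n+1)) = 0 := h.2.1 _ (le_refl _)
  rw [(by omega : 2*(n+1) = 2*n+2)] at h1 h2
  omega

lemma count_valid (hL : IsDyckPath (n+1) L) :
    ((Finset.range (2*n+1)).filter (fun k => InsOk L k)).card
      + ((Finset.range (2*n+1)).filter (fun k => LiftOk n L k)).card = n + 2 := by
  classical
  set A := (Finset.range (2*n+1)).filter (fun k => InsOk L k) with hA
  set B := (Finset.range (2*n+1)).filter (fun k => LiftOk n L k) with hB
  set E := insert (2*n+2) ((Finset.range (2*n+2)).filter (fun q => L (q+1) + 1 = L q)) with hE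
  have hcardE : E.card = n + 2 := by
    rw [hE, Finset.card_insert_of_notMem (by simp), down_count hL]
  -- membership facts for A
  have hmemA : ∀ k ∈ A, k ≤ 2*n ∧ InsOk L k := by
    intro k hk
    rw [hA, Finset.mem_filter, Finset.mem_range] at hk
    exact ⟨by omega, hk.2⟩
  have hmemB : ∀ k ∈ B, k ≤ 2*n ∧ LiftOk n L k := by
    intro k hk
    rw [hB, Finset.mem_filter, Finset.mem_range] at hk
    exact ⟨by omega, hk.2⟩
  -- ret spec with entering-step direction
  have hretB : ∀ k, k ≤ 2*n → LiftOk n L k →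
      k + 2 ≤ ret L k ∧ ret L k ≤ 2*n+2 ∧ L (ret L k) = L k ∧
      (∀ j, k < j → j < ret L k → L k < L j) ∧ L (ret L k - 1) = L (ret L k) + 1 := by
    intro k hk hok
    obtain ⟨ht2, hle, hLt, hmin⟩ := ret_spec hL hk hok.1 rfl
    refine ⟨ht2, hle, hLt, hmin, ?_⟩
    obtain ⟨s, hs⟩ : ∃ s, ret L k = s + 1 := ⟨ret L k - 1, by omega⟩
    have h5 : L k < L s := hmin s (by omega) (by omega)
    have h6 := step_le hL s
    rw [hs]
    simp only [Nat.add_sub_cancel]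
    rw [hs] at hLt
    omega
  -- images are inside E
  have himgA : ∀ k ∈ A, k + 1 ∈ E := by
    intro k hk
    obtain ⟨hk1, hup, hdown⟩ := hmemA k hk
    rw [hE, Finset.mem_insert, Finset.mem_filter, Finset.mem_range]
    right
    refine ⟨by omega, ?_⟩
    have e : L (k+1+1) = L (k+2) := rfl
    omega
  have himgB : ∀ k ∈ B, ret L k ∈ E := by
    intro k hk
    obtain ⟨hk1, hok⟩ := hmemB k hk
    obtain ⟨ht2, hle, hLt, hmin, hent⟩ := hretB k hk1 hok
    rw [hE, Finset.mem_insert, Finset.mem_filter, Finset.mem_range]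
    rcases hok.2 with h' | h'
    · left; exact h'
    · right
      refine ⟨?_, by omega⟩
      rcases Nat.eq_or_lt_of_le hle with h'' | h''
      · exfalso
        have hz : L (2*n+2) = 0 := hL.2.1 _ (le_refl _)
        rw [h''] at h'
        rw [hz] at h'
        omega
      · omega
  -- injectivity of k ↦ ret L k on B
  have hinjB : Set.InjOn (ret L) B := by
    intro a ha b hb hab
    obtain ⟨ha1, hoka⟩ := hmemB a ha
    obtain ⟨hb1, hokb⟩ := hmemB b hb
    obtain ⟨ha2, hale, haLt, hamin, -⟩ := hretB a ha1 hoka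
    obtain ⟨hb2, hble, hbLt, hbmin, -⟩ := hretB b hb1 hokb
    rcases lt_trichotomy a b with h' | h' | h'
    · exfalso
      have := hamin b h' (by omega)
      rw [hab] at haLt
      omega
    · exact h'
    · exfalso
      have := hbmin a h' (by omega)
      rw [← hab] at hbLt
      omega
  -- disjointness of the images
  have hdisj : Disjoint (A.image (· + 1)) (B.image (ret L)) := by
    rw [Finset.disjoint_left]
    intro q hqA hqB
    rw [Finset.mem_image] at hqA hqB
    obtain ⟨a, ha, ha'⟩ := hqA
    obtain ⟨b, hb, hb'⟩ := hqB
    obtain ⟨ha1, haup, hadown⟩ := hmemA a ha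
    obtain ⟨hb1, hokb⟩ := hmemB b hb
    obtain ⟨hb2, hble, hbLt, hbmin, hent⟩ := hretB b hb1 hokb
    have he : ret L b - 1 = a := by omega
    rw [he] at hent
    have e2 : a + 1 = ret L b := by omega
    rw [e2] at haup
    omega
  -- surjectivity
  have hsurj : ∀ q ∈ E, q ∈ (A.image (· + 1)) ∪ (B.image (ret L)) := by
    intro q hq
    rw [Finset.mem_union, Finset.mem_image, Finset.mem_image]
    rw [hE, Finset.mem_insert, Finset.mem_filter, Finset.mem_range] at hq
    have hz : L (2*n+2) = 0 := hL.2.1 _ (le_refl _)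
    have hq1 : 1 ≤ q := by
      by_contra hc
      rcases hq with h' | h'
      · omega
      · have hq0 : q = 0 := by omega
        rw [hq0] at h'
        have h0 := hL.1
        have e : L (0+1) = L 1 := rfl
        omega
    obtain ⟨r, rfl⟩ : ∃ r, q = r + 1 := ⟨q - 1, by omega⟩
    rcases hL.2.2 r (by omega : r < 2*(n+1)) with hupE | hdnE
    · -- up-entering step: insert preimage
      left
      have hne : r + 1 ≠ 2*n+2 := by
        intro hc
        rw [hc] at hupE
        rw [hz] at hupE
        omega
      have hq' : r + 1 < 2*n+2 ∧ L (r+1+1) + 1 = L (r+1) := by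
        rcases hq with h' | h'
        · exact absurd h' hne
        · exact h'
      refine ⟨r, ?_, rfl⟩
      rw [hA, Finset.mem_filter, Finset.mem_range]
      have e : L (r+1+1) = L (r+2) := rfl
      exact ⟨by omega, hupE, by omega⟩
    · -- down-entering step: lift preimage
      right
      set a := Nat.findGreatest (fun j => L j ≤ L (r+1)) r with ha
      have hP0 : L 0 ≤ L (r+1) := by rw [hL.1]; omega
      have haP : L a ≤ L (r+1) := Nat.findGreatest_spec (P := fun j => L j ≤ L (r+1)) (Nat.zero_le r) hP0
      have hale : a ≤ r := Nat.findGreatest_le r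
      have hagt : ∀ j, a < j → j ≤ r → ¬ (L j ≤ L (r+1)) := by
        intro j h1 h2
        exact Nat.findGreatest_is_greatest (P := fun j => L j ≤ L (r+1)) h1 h2
      have har : a ≠ r := by
        intro hc
        rw [hc] at haP
        omega
      have haup : L (a+1) = L a + 1 ∧ L a = L (r+1) := by
        have h1 : ¬ L (a+1) ≤ L (r+1) := hagt (a+1) (by omega) (by omega)
        have h2 := step_le hL a
        omega
      have hret : ret L a = r+1 := by
        apply ret_eq_of ⟨by omega, by omega⟩
        intro j hj1 hj2
        by_contra hc
        have := hagt j (by omega) (by omega)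
        omega
      refine ⟨a, ?_, hret⟩
      rw [hB, Finset.mem_filter, Finset.mem_range]
      refine ⟨by omega, haup.1, ?_⟩
      rw [hret]
      rcases hq with h' | h'
      · left; exact h'
      · right; omega
  -- assemble
  have hunion : (A.image (· + 1)) ∪ (B.image (ret L)) = E := by
    apply Finset.Subset.antisymm
    · intro q hq
      rw [Finset.mem_union] at hq
      rcases hq with hq | hq
      · rw [Finset.mem_image] at hq
        obtain ⟨a, ha, ha'⟩ := hq
        rw [← ha']
        exact himgA a ha
      · rw [Finset.mem_image] at hq
        obtain ⟨b, hb, hb'⟩ := hq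
        rw [← hb']
        exact himgB b hb
    · intro q hq
      exact hsurj q hq
  have hcardA : (A.image (· + 1)).card = A.card :=
    Finset.card_image_of_injective A (add_left_injective 1)
  have hcardB : (B.image (ret L)).card = B.card :=
    Finset.card_image_of_injOn hinjB
  have hcu := Finset.card_union_of_disjoint hdisj
  rw [hunion, hcardA, hcardB, hcardE] at hcu
  omega
end count

section chars
variable {n k : ℕ} {ℓ ℓ' L : ℕ → ℕ}

lemma applyMove_true (n : ℕ) (ℓ : ℕ → ℕ) (k : ℕ) : applyMove n ℓ k true = insertMove ℓ k := by
  simp [applyMove]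

lemma applyMove_false (n : ℕ) (ℓ : ℕ → ℕ) (k : ℕ) : applyMove n ℓ k false = liftMove n ℓ k := by
  simp [applyMove]

lemma move_dyck (h : IsDyckPath n ℓ) (hk : k ≤ 2*n) (ε : Bool) :
    IsDyckPath (n+1) (applyMove n ℓ k ε) := by
  cases ε
  · rw [applyMove_false]; exact lift_dyck h hk
  · rw [applyMove_true]; exact insert_dyck h hk

lemma move_uniq (h : IsDyckPath n ℓ) (h' : IsDyckPath n ℓ') (hk : k ≤ 2*n) (ε : Bool)
    (he : applyMove n ℓ k ε = applyMove n ℓ' k ε) : ℓ = ℓ' := by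
  cases ε
  · rw [applyMove_false, applyMove_false] at he
    have e1 := (lift_fwd h hk).2
    have e2 := (lift_fwd h' hk).2
    rw [he] at e1
    exact e1.trans e2.symm
  · rw [applyMove_true, applyMove_true] at he
    have e1 := insert_uniq he
    have e2 := insert_uniq (rfl : insertMove ℓ' k = insertMove ℓ' k)
    exact e1.trans e2.symm

lemma exists_ins_iff (hL : IsDyckPath (n+1) L) (hk : k ≤ 2*n) :
    (∃ ℓ, IsDyckPath n ℓ ∧ applyMove n ℓ k true = L) ↔ InsOk L k := by
  constructor
  · rintro ⟨ℓ, h, he⟩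
    rw [applyMove_true] at he
    exact insert_fwd he
  · intro h
    obtain ⟨hD, he⟩ := insert_bwd hL hk h.1 h.2
    exact ⟨_, hD, by rw [applyMove_true]; exact he⟩

lemma exists_lift_iff (hL : IsDyckPath (n+1) L) (hk : k ≤ 2*n) :
    (∃ ℓ, IsDyckPath n ℓ ∧ applyMove n ℓ k false = L) ↔ LiftOk n L k := by
  constructor
  · rintro ⟨ℓ, h, he⟩
    rw [applyMove_false] at he
    have h2 := (lift_fwd h hk).1
    rw [he] at h2
    exact h2
  · intro h
    obtain ⟨hD, he⟩ := lift_bwd hL hk h.1 rfl h.2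
    exact ⟨_, hD, by rw [applyMove_false]; exact he⟩

end chars

section one

lemma dyck_one_holds : IsDyckPath 1 (fun j => if j = 1 then 1 else 0) := by
  refine ⟨by simp, fun j hj => by simp; omega, fun k hk => ?_⟩
  interval_cases k <;> simp

lemma dyck_one_eq {ℓ : ℕ → ℕ} (h : IsDyckPath 1 ℓ) : ℓ = fun j => if j = 1 then 1 else 0 := by
  funext j
  match j with
  | 0 => simpa using h.1
  | 1 =>
    have hs := h.2.2 0 (by omega)
    have h0 := h.1
    have e : ℓ (0+1) = ℓ 1 := rfl
    norm_num
    omega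
  | (j+2) =>
    have := h.2.1 (j+2) (by omega)
    simp only [if_neg (by omega : ¬ j + 2 = 1)]
    exact this

end one

open Classical in
lemma step_apply {n : ℕ} (p : PMF (ℕ → ℕ)) {c : ENNReal}
    (hsupp : ∀ ℓ, ¬ IsDyckPath n ℓ → p ℓ = 0)
    (hconst : ∀ ℓ, IsDyckPath n ℓ → p ℓ = c)
    (L : ℕ → ℕ) :
    (p.bind fun ℓ => (PMF.uniformOfFintype (Fin (2 * n + 1))).bind fun k =>
        (PMF.uniformOfFintype Bool).bind fun ε => PMF.pure (applyMove n ℓ (k : ℕ) ε)) L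
    = ((2*n+1 : ℕ) : ENNReal)⁻¹ * 2⁻¹ *
        (((((Finset.range (2*n+1)).filter
              (fun k => ∃ ℓ, IsDyckPath n ℓ ∧ applyMove n ℓ k true = L)).card : ENNReal)
          + (((Finset.range (2*n+1)).filter
              (fun k => ∃ ℓ, IsDyckPath n ℓ ∧ applyMove n ℓ k false = L)).card : ENNReal)) * c) := by
  classical
  have key : ∀ (k : ℕ) (ε : Bool), k ≤ 2*n →
      ∑' ℓ, p ℓ * (if L = applyMove n ℓ k ε then 1 else 0)
        = if (∃ ℓ, IsDyckPath n ℓ ∧ applyMove n ℓ k ε = L) then c else 0 := by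
    intro k ε hk
    by_cases hex : ∃ ℓ, IsDyckPath n ℓ ∧ applyMove n ℓ k ε = L
    · obtain ⟨ℓ₁, hD1, he1⟩ := hex
      rw [if_pos ⟨ℓ₁, hD1, he1⟩]
      rw [tsum_eq_single ℓ₁ ?_]
      · rw [if_pos he1.symm, hconst ℓ₁ hD1, mul_one]
      · intro ℓ hne
        by_cases hD : IsDyckPath n ℓ
        · by_cases hLe : L = applyMove n ℓ k ε
          · exact absurd (move_uniq hD hD1 hk ε (hLe.symm.trans he1.symm)) hne
          · rw [if_neg hLe, mul_zero]
        · rw [hsupp ℓ hD, zero_mul]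
    · rw [if_neg hex]
      rw [ENNReal.tsum_eq_zero]
      intro ℓ
      by_cases hD : IsDyckPath n ℓ
      · have hne : ¬ L = applyMove n ℓ k ε := fun hc => hex ⟨ℓ, hD, hc.symm⟩
        rw [if_neg hne, mul_zero]
      · rw [hsupp ℓ hD, zero_mul]
  rw [PMF.bind_apply]
  simp only [PMF.bind_apply, PMF.uniformOfFintype_apply, PMF.pure_apply, tsum_fintype,
    Fintype.card_fin, Fintype.card_bool, Nat.cast_ofNat, Finset.mul_sum]
  rw [Summable.tsum_finsetSum (fun _ _ => ENNReal.summable)]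
  have hstep1 : ∀ (k : Fin (2*n+1)),
      (∑' (ℓ : ℕ → ℕ), ∑ ε : Bool,
        p ℓ * (((2*n+1 : ℕ) : ENNReal)⁻¹ * ((2 : ENNReal)⁻¹ *
          (if L = applyMove n ℓ (k : ℕ) ε then 1 else 0))))
      = ((2*n+1 : ℕ) : ENNReal)⁻¹ * ((2 : ENNReal)⁻¹ *
          ((if (∃ ℓ, IsDyckPath n ℓ ∧ applyMove n ℓ (k : ℕ) true = L) then c else 0)
            + (if (∃ ℓ, IsDyckPath n ℓ ∧ applyMove n ℓ (k : ℕ) false = L) then c else 0))) := by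
    intro k
    rw [Summable.tsum_finsetSum (fun _ _ => ENNReal.summable)]
    rw [Fintype.sum_bool]
    have hk : (k : ℕ) ≤ 2*n := by omega
    have e : ∀ (ε : Bool), ∑' (ℓ : ℕ → ℕ),
        p ℓ * (((2*n+1 : ℕ) : ENNReal)⁻¹ * ((2 : ENNReal)⁻¹ *
          (if L = applyMove n ℓ (k : ℕ) ε then 1 else 0)))
        = ((2*n+1 : ℕ) : ENNReal)⁻¹ * ((2 : ENNReal)⁻¹ *
            (if (∃ ℓ, IsDyckPath n ℓ ∧ applyMove n ℓ (k : ℕ) ε = L) then c else 0)) := by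
      intro ε
      have e1 : ∀ ℓ, p ℓ * (((2*n+1 : ℕ) : ENNReal)⁻¹ * ((2 : ENNReal)⁻¹ *
          (if L = applyMove n ℓ (k : ℕ) ε then 1 else 0)))
          = ((2*n+1 : ℕ) : ENNReal)⁻¹ * ((2 : ENNReal)⁻¹ *
            (p ℓ * (if L = applyMove n ℓ (k : ℕ) ε then 1 else 0))) := fun ℓ => by ring
      rw [tsum_congr e1, ENNReal.tsum_mul_left, ENNReal.tsum_mul_left, key (k : ℕ) ε hk]
    rw [e true, e false]
    ring
  rw [Finset.sum_congr rfl (fun k _ => hstep1 k)]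
  rw [Fin.sum_univ_eq_sum_range (fun k => ((2*n+1 : ℕ) : ENNReal)⁻¹ * ((2 : ENNReal)⁻¹ *
      ((if (∃ ℓ, IsDyckPath n ℓ ∧ applyMove n ℓ k true = L) then c else 0)
        + (if (∃ ℓ, IsDyckPath n ℓ ∧ applyMove n ℓ k false = L) then c else 0))))]
  rw [← Finset.mul_sum, ← Finset.mul_sum, Finset.sum_add_distrib]
  rw [← Finset.sum_filter (p := fun k => ∃ ℓ, IsDyckPath n ℓ ∧ applyMove n ℓ k true = L)
      (f := fun _ => c)]
  rw [← Finset.sum_filter (p := fun k => ∃ ℓ, IsDyckPath n ℓ ∧ applyMove n ℓ k false = L)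
      (f := fun _ => c)]
  rw [Finset.sum_const, Finset.sum_const, nsmul_eq_mul, nsmul_eq_mul]
  ring

open Classical in
lemma count_exists {n : ℕ} {L : ℕ → ℕ} (hL : IsDyckPath (n+1) L) :
    ((Finset.range (2*n+1)).filter
        (fun k => ∃ ℓ, IsDyckPath n ℓ ∧ applyMove n ℓ k true = L)).card
      + ((Finset.range (2*n+1)).filter
        (fun k => ∃ ℓ, IsDyckPath n ℓ ∧ applyMove n ℓ k false = L)).card = n + 2 := by
  have e1 : (Finset.range (2*n+1)).filter
        (fun k => ∃ ℓ, IsDyckPath n ℓ ∧ applyMove n ℓ k true = L)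
      = (Finset.range (2*n+1)).filter (fun k => InsOk L k) := by
    ext k
    simp only [Finset.mem_filter, Finset.mem_range]
    exact and_congr_right (fun hk => exists_ins_iff hL (by omega))
  have e2 : (Finset.range (2*n+1)).filter
        (fun k => ∃ ℓ, IsDyckPath n ℓ ∧ applyMove n ℓ k false = L)
      = (Finset.range (2*n+1)).filter (fun k => LiftOk n L k) := by
    ext k
    simp only [Finset.mem_filter, Finset.mem_range]
    exact and_congr_right (fun hk => exists_lift_iff hL (by omega))
  rw [e1, e2]
  exact count_valid hL

end Marchal

/-- Let `μ 1` be the point mass at the unique `2`-step Dyck path `(0,1,0)`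
and let `μ (n+1)` be obtained from `μ n` by applying a uniformly chosen move
(`ε` uniform in `{insert, lift}`, `true` = insert, `false` = lift) at a uniformly chosen
position `k ∈ {0, …, 2n}`, independently. Then for every `n ≥ 1`, `μ n` is the uniform
distribution on the set of `2n`-step Dyck paths: its support is exactly the set of
`2n`-step Dyck paths and it gives each of them the same mass. -/
theorem marchal_uniform (μ : ℕ → PMF (ℕ → ℕ))
    (h1 : μ 1 = PMF.pure (fun j => if j = 1 then 1 else 0))
    (hrec : ∀ n, 1 ≤ n → μ (n + 1) =
      (μ n).bind fun ℓ =>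
        (PMF.uniformOfFintype (Fin (2 * n + 1))).bind fun k =>
          (PMF.uniformOfFintype Bool).bind fun ε =>
            PMF.pure (applyMove n ℓ (k : ℕ) ε))
    (n : ℕ) (hn : 1 ≤ n) :
    (μ n).support = {ℓ | IsDyckPath n ℓ} ∧
    ∀ ℓ ℓ' : ℕ → ℕ, IsDyckPath n ℓ → IsDyckPath n ℓ' → μ n ℓ = μ n ℓ' := by
  classical
  classical
  induction n, hn using Nat.le_induction with
  | base =>
    constructor
    · rw [h1, PMF.support_pure]
      ext ℓ
      simp only [Set.mem_singleton_iff, Set.mem_setOf_eq]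
      constructor
      · intro h; rw [h]; exact Marchal.dyck_one_holds
      · intro h; exact Marchal.dyck_one_eq h
    · intro ℓ ℓ' h h'
      rw [Marchal.dyck_one_eq h, Marchal.dyck_one_eq h']
  | succ n hn IH =>
    obtain ⟨hsupp, hconst'⟩ := IH
    have hzig : IsDyckPath n (fun j => if j < 2*n then j % 2 else 0) := Marchal.zigzag_dyck n
    have hsupp0 : ∀ ℓ, ¬ IsDyckPath n ℓ → μ n ℓ = 0 := by
      intro ℓ h
      by_contra hc
      have hmem : ℓ ∈ (μ n).support := (PMF.mem_support_iff _ _).mpr hc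
      rw [hsupp] at hmem
      exact h hmem
    have hconst : ∀ ℓ, IsDyckPath n ℓ → μ n ℓ = μ n (fun j => if j < 2*n then j % 2 else 0) :=
      fun ℓ h => hconst' ℓ _ h hzig
    have hc0 : μ n (fun j => if j < 2*n then j % 2 else 0) ≠ 0 := by
      have hmem : (fun j => if j < 2*n then j % 2 else 0) ∈ (μ n).support := by
        rw [hsupp]; exact hzig
      exact (PMF.mem_support_iff _ _).mp hmem
    have hval : ∀ L, IsDyckPath (n+1) L → μ (n+1) L
        = ((2*n+1 : ℕ) : ENNReal)⁻¹ * 2⁻¹ *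
            (((n+2 : ℕ) : ENNReal) * μ n (fun j => if j < 2*n then j % 2 else 0)) := by
      intro L hL
      rw [hrec n hn, Marchal.step_apply (μ n) hsupp0 hconst L, ← Nat.cast_add,
        Marchal.count_exists hL]
    have hzero : ∀ L, ¬ IsDyckPath (n+1) L → μ (n+1) L = 0 := by
      intro L hnd
      rw [hrec n hn, Marchal.step_apply (μ n) hsupp0 hconst L]
      have hA : ((Finset.range (2*n+1)).filter
          (fun k => ∃ ℓ, IsDyckPath n ℓ ∧ applyMove n ℓ k true = L)) = ∅ := by
        rw [Finset.filter_eq_empty_iff]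
        intro k hk
        rintro ⟨ℓ, hD, he⟩
        rw [Finset.mem_range] at hk
        exact hnd (he ▸ Marchal.move_dyck hD (by omega) true)
      have hB : ((Finset.range (2*n+1)).filter
          (fun k => ∃ ℓ, IsDyckPath n ℓ ∧ applyMove n ℓ k false = L)) = ∅ := by
        rw [Finset.filter_eq_empty_iff]
        intro k hk
        rintro ⟨ℓ, hD, he⟩
        rw [Finset.mem_range] at hk
        exact hnd (he ▸ Marchal.move_dyck hD (by omega) false)
      rw [hA, hB]
      simp
    constructor
    · ext L
      simp only [PMF.mem_support_iff, Set.mem_setOf_eq]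
      constructor
      · intro hne
        by_contra hnd
        exact hne (hzero L hnd)
      · intro hL
        rw [hval L hL]
        refine mul_ne_zero (mul_ne_zero ?_ ?_) (mul_ne_zero ?_ hc0)
        · exact ENNReal.inv_ne_zero.mpr (ENNReal.natCast_ne_top _)
        · exact ENNReal.inv_ne_zero.mpr (by norm_num)
        · exact Nat.cast_ne_zero.mpr (by omega)
    · intro L L' hL hL'
      rw [hval L hL, hval L' hL']
end

section
/- Let n be a positive integer and let B and B′ be disjoint nonempty subsets of {0, 1, …, n−1}. Then the convex hulls in ℂ of the point sets {e^{2πik/n} : k ∈ B} and {e^{2πik/n} : k ∈ B′} are disjoint if and only if there are no indices a < b < c < d in {0, 1, …, n−1} such that either a, c ∈ B and b, d ∈ B′, or a, c ∈ B′ and b, d ∈ B. -/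
set_option maxHeartbeats 1000000
open Real

section Helpers

lemma cos_arc_lt {h y : ℝ} (h0 : 0 ≤ h) (hπ : h < π) (hy1 : h < y) (hy2 : y < 2*π - h) :
    Real.cos y < Real.cos h := by
  rcases le_or_gt y π with hyπ | hyπ
  · exact Real.cos_lt_cos_of_nonneg_of_le_pi h0 hyπ hy1
  · have : Real.cos y = Real.cos (2*π - y) := by
      rw [Real.cos_sub]; simp [Real.cos_two_pi, Real.sin_two_pi]
    rw [this]
    exact Real.cos_lt_cos_of_nonneg_of_le_pi h0 (by linarith) (by linarith)

lemma cos_arc_gt {h y : ℝ} (hπ : h ≤ π) (hy1 : -h < y) (hy2 : y < h) :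
    Real.cos h < Real.cos y := by
  rw [← Real.cos_abs y]
  exact Real.cos_lt_cos_of_nonneg_of_le_pi (abs_nonneg _) hπ (abs_lt.2 ⟨hy1, hy2⟩)

noncomputable def gfun (ψ : ℝ) (z : ℂ) : ℝ := Real.cos ψ * z.re + Real.sin ψ * z.im

lemma gfun_linear (ψ : ℝ) : IsLinearMap ℝ (gfun ψ) := by
  constructor
  · intro x y; simp [gfun]; ring
  · intro c x; simp [gfun, Complex.smul_re, Complex.smul_im]; ring

lemma gfun_exp (ψ θ : ℝ) : gfun ψ (Complex.exp ((θ : ℂ) * Complex.I)) = Real.cos (θ - ψ) := by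
  simp [gfun, Complex.exp_mul_I, Real.cos_sub, Complex.add_re, Complex.add_im,
    Complex.cos_ofReal_re, Complex.sin_ofReal_re]
  ring

lemma chords_meet {θa θb θc θd : ℝ} (h1 : θa < θb) (h2 : θb < θc) (h3 : θc < θd)
    (h4 : θd < θa + 2*π) :
    ∃ p : ℂ,
      p ∈ segment ℝ (Complex.exp ((θa:ℂ)*Complex.I)) (Complex.exp ((θc:ℂ)*Complex.I)) ∧
      p ∈ segment ℝ (Complex.exp ((θb:ℂ)*Complex.I)) (Complex.exp ((θd:ℂ)*Complex.I)) := by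
  have hπ : 0 < π := Real.pi_pos
  set ψ : ℝ := (θa + θc)/2 with hψ
  set h : ℝ := (θc - θa)/2 with hh
  have hh0 : 0 < h := by rw [hh]; linarith
  have hhπ : h < π := by rw [hh]; linarith
  set gb : ℝ := Real.cos (θb - ψ) with hgb
  set gd : ℝ := Real.cos (θd - ψ) with hgd
  set r : ℝ := Real.cos h with hr
  have hbr : r < gb := cos_arc_gt hhπ.le (by rw [hψ, hh]; linarith) (by rw [hψ, hh]; linarith)
  have hdr : gd < r := cos_arc_lt hh0.le hhπ (by rw [hψ, hh]; linarith) (by rw [hψ, hh]; linarith)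
  set t : ℝ := (gb - r)/(gb - gd) with ht
  have hbd : 0 < gb - gd := by linarith
  have ht0 : 0 < t := div_pos (by linarith) hbd
  have ht1 : t < 1 := (div_lt_one hbd).2 (by linarith)
  set eb : ℂ := Complex.exp ((θb:ℂ)*Complex.I) with heb
  set ed : ℂ := Complex.exp ((θd:ℂ)*Complex.I) with hed
  set p : ℂ := (1 - t) • eb + t • ed with hp
  have hlin := gfun_linear ψ
  clear_value ψ h gb gd r t eb ed p
  have eq0 : gfun ψ p = r := by
    have : gfun ψ p = (1-t) * gb + t * gd := by
      rw [hp, hlin.map_add, hlin.map_smul, hlin.map_smul, heb, hed, gfun_exp, gfun_exp]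
      simp [hgb, hgd, smul_eq_mul]
    rw [this]
    have htm : t * (gb - gd) = gb - r := by rw [ht]; field_simp
    linarith [htm]
  have hnorm : p.re^2 + p.im^2 ≤ 1 := by
    have hb1 : ‖eb‖ = 1 := by rw [heb]; exact Complex.norm_exp_ofReal_mul_I θb
    have hd1 : ‖ed‖ = 1 := by rw [hed]; exact Complex.norm_exp_ofReal_mul_I θd
    have hle : ‖p‖ ≤ 1 := by
      rw [hp]
      calc ‖(1-t) • eb + t • ed‖ ≤ ‖(1-t) • eb‖ + ‖t • ed‖ := norm_add_le _ _
        _ = |1-t| * ‖eb‖ + |t| * ‖ed‖ := by rw [norm_smul, norm_smul]; simp [Real.norm_eq_abs]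
        _ = 1 := by rw [hb1, hd1, abs_of_nonneg (by linarith), abs_of_nonneg ht0.le]; ring
    have habs : ‖p‖ ≤ 1 := hle
    have h2 : p.re^2 + p.im^2 = (‖p‖)^2 := by
      rw [Complex.sq_norm, Complex.normSq_apply]; ring
    nlinarith [norm_nonneg p]
  set s : ℝ := -Real.sin ψ * p.re + Real.cos ψ * p.im with hsdef
  clear_value s
  have eq1 : Real.cos ψ * p.re + Real.sin ψ * p.im = r := eq0
  have pyth := Real.sin_sq_add_cos_sq ψ
  have pythh := Real.sin_sq_add_cos_sq h
  have hsq : r^2 + s^2 = p.re^2 + p.im^2 := by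
    have e1 : r = Real.cos ψ * p.re + Real.sin ψ * p.im := eq1.symm
    rw [e1, hsdef]
    linear_combination (p.re^2 + p.im^2) * pyth
  rw [hr] at hsq
  have hsin : 0 < Real.sin h := Real.sin_pos_of_pos_of_lt_pi hh0 hhπ
  have hs1 : -Real.sin h ≤ s := by nlinarith [sq_nonneg (s + Real.sin h), hsq, hnorm, pythh]
  have hs2 : s ≤ Real.sin h := by nlinarith [sq_nonneg (s - Real.sin h), hsq, hnorm, pythh]
  set l : ℝ := (Real.sin h + s)/(2 * Real.sin h) with hl
  clear_value l
  have hl0 : 0 ≤ l := by rw [hl]; exact div_nonneg (by linarith) (by linarith)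
  have hl1 : l ≤ 1 := by rw [hl, div_le_one (by linarith)]; linarith
  have hs' : Real.sin h * (1 - 2*l) = -s := by
    rw [hl]; field_simp; ring
  have hpr : p.re = Real.cos ψ * r - Real.sin ψ * s := by
    linear_combination Real.cos ψ * eq1 + Real.sin ψ * hsdef - p.re * pyth
  have hpi : p.im = Real.sin ψ * r + Real.cos ψ * s := by
    linear_combination Real.sin ψ * eq1 - Real.cos ψ * hsdef - p.im * pyth
  have hθa : θa = ψ - h := by rw [hψ, hh]; ring
  have hθc : θc = ψ + h := by rw [hψ, hh]; ring
  have hpeq : (1 - l) • Complex.exp ((θa:ℂ)*Complex.I) + l • Complex.exp ((θc:ℂ)*Complex.I) = p := by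
    apply Complex.ext
    · simp only [Complex.add_re, Complex.real_smul, Complex.mul_re, Complex.ofReal_re,
        Complex.ofReal_im, Complex.exp_ofReal_mul_I_re, Complex.exp_ofReal_mul_I_im]
      rw [hθa, hθc, Real.cos_sub, Real.cos_add, hpr, hr]
      linear_combination Real.sin ψ * hs'
    · simp only [Complex.add_im, Complex.real_smul, Complex.mul_im, Complex.ofReal_re,
        Complex.ofReal_im, Complex.exp_ofReal_mul_I_re, Complex.exp_ofReal_mul_I_im]
      rw [hθa, hθc, Real.sin_sub, Real.sin_add, hpi, hr]
      linear_combination - Real.cos ψ * hs'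
  exact ⟨p, ⟨1 - l, l, by linarith, hl0, by ring, hpeq⟩,
    ⟨1 - t, t, by linarith, ht0.le, by ring, hp.symm⟩⟩

lemma sep {a b c d : ℝ} (hab : a ≤ b) (hbc : b < c) (hcd : c ≤ d) (hda : d < a + 2*π) :
    ∃ ψ r : ℝ, (∀ θ, a ≤ θ → θ ≤ b → Real.cos (θ - ψ) < r) ∧
               (∀ θ, c ≤ θ → θ ≤ d → r < Real.cos (θ - ψ)) := by
  have hπ : 0 < π := Real.pi_pos
  set ψ : ℝ := (b + c + d + a + 2*π)/4 with hψ
  set h : ℝ := (d + a + 2*π - b - c)/4 with hh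
  have hh0 : 0 < h := by rw [hh]; linarith
  have hhπ : h < π := by rw [hh]; linarith
  refine ⟨ψ, Real.cos h, ?_, ?_⟩
  · intro θ hθ1 hθ2
    have : Real.cos (θ - ψ) = Real.cos (ψ - θ) := by rw [← Real.cos_neg]; ring_nf
    rw [this]
    exact cos_arc_lt hh0.le hhπ (by rw [hψ, hh]; linarith) (by rw [hψ, hh]; linarith)
  · intro θ hθ1 hθ2
    exact cos_arc_gt hhπ.le (by rw [hψ, hh]; linarith) (by rw [hψ, hh]; linarith)

def cutKey (n m' x : ℕ) : ℕ := if m' < x then x - (m' + 1) else x + n - (m' + 1)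

lemma cutKey_lt {n m' x : ℕ} (hm : m' < n) (hx : x < n) : cutKey n m' x < n := by
  unfold cutKey; split_ifs <;> omega

lemma cutKey_self {n m' : ℕ} (hm : m' < n) : cutKey n m' m' = n - 1 := by
  unfold cutKey; split_ifs <;> omega

lemma cutKey_inj {n m' x y : ℕ} (hm : m' < n) (hx : x < n) (hy : y < n)
    (h : cutKey n m' x = cutKey n m' y) : x = y := by
  unfold cutKey at h; split_ifs at h <;> omega

lemma extract (n m' : ℕ) (hm : m' < n) {x1 x2 x3 : ℕ} (h1 : x1 < n) (h2 : x2 < n) (h3 : x3 < n)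
    (k12 : cutKey n m' x1 < cutKey n m' x2) (k23 : cutKey n m' x2 < cutKey n m' x3)
    (k3 : cutKey n m' x3 < n - 1)
    {B B' : Set ℕ} (m1 : x1 ∈ B) (m2 : x2 ∈ B') (m3 : x3 ∈ B) (m4 : m' ∈ B') :
    ∃ a b c d : ℕ, a < b ∧ b < c ∧ c < d ∧
      ((a ∈ B ∧ c ∈ B ∧ b ∈ B' ∧ d ∈ B') ∨ (a ∈ B' ∧ c ∈ B' ∧ b ∈ B ∧ d ∈ B)) := by
  unfold cutKey at k12 k23 k3
  split_ifs at k12 k23 k3 <;>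
  first
  | exact ⟨x1, x2, x3, m', by omega, by omega, by omega, Or.inl ⟨m1, m3, m2, m4⟩⟩
  | exact ⟨x2, x3, m', x1, by omega, by omega, by omega, Or.inr ⟨m2, m4, m3, m1⟩⟩
  | exact ⟨x3, m', x1, x2, by omega, by omega, by omega, Or.inl ⟨m3, m1, m4, m2⟩⟩
  | exact ⟨m', x1, x2, x3, by omega, by omega, by omega, Or.inr ⟨m4, m2, m1, m3⟩⟩
  | omega

lemma vtx_exp (n k m : ℕ) (hn : 0 < n) :
    vtx n k = Complex.exp ((((2*π*(k + m*n))/n : ℝ) : ℂ) * Complex.I) := by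
  unfold vtx
  have hn' : (n:ℂ) ≠ 0 := by exact_mod_cast hn.ne'
  have : ((((2*π*(k + m*n))/n : ℝ) : ℂ) * Complex.I) =
      2*π*Complex.I*k/n + m*(2*π*Complex.I) := by
    push_cast; field_simp
  rw [this, Complex.exp_add, Complex.exp_nat_mul_two_pi_mul_I, mul_one]

lemma vtx_angle (n x t : ℕ) (hn : 0 < n) (m : ℕ) (h : t = x + m*n) :
    vtx n x = Complex.exp ((((2*π*t)/n : ℝ) : ℂ) * Complex.I) := by
  subst h
  rw [vtx_exp n x m hn]
  norm_num

end Helpers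

/-- Let `B` and `B'` be disjoint nonempty subsets of `{0, …, n-1}`. The
convex hulls of `{e^{2πik/n} : k ∈ B}` and `{e^{2πik/n} : k ∈ B'}` are disjoint if and only
if there are no indices `a < b < c < d` with `a, c` in one of the two sets and `b, d` in the
other. -/
theorem convexHulls_disjoint_iff (n : ℕ) (hn : 0 < n) (B B' : Set ℕ)
    (hBne : B.Nonempty) (hB'ne : B'.Nonempty)
    (hBsub : B ⊆ Set.Iio n) (hB'sub : B' ⊆ Set.Iio n) (hdisj : Disjoint B B') :
    Disjoint (convexHull ℝ (vtx n '' B)) (convexHull ℝ (vtx n '' B')) ↔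
      ¬∃ a b c d : ℕ, a < b ∧ b < c ∧ c < d ∧
        ((a ∈ B ∧ c ∈ B ∧ b ∈ B' ∧ d ∈ B') ∨ (a ∈ B' ∧ c ∈ B' ∧ b ∈ B ∧ d ∈ B)) := by
  have hnR : (0:ℝ) < n := by exact_mod_cast hn
  set αr : ℕ → ℝ := fun t => 2*π*t/n with hαr
  have h2pi : (0:ℝ) < 2*π := by positivity
  have hmono : ∀ s t : ℕ, s ≤ t → αr s ≤ αr t := by
    intro s t hst
    rw [hαr]
    exact (div_le_div_iff_of_pos_right hnR).mpr (by nlinarith [(show (s:ℝ) ≤ t by exact_mod_cast hst)])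
  have hsmono : ∀ s t : ℕ, s < t → αr s < αr t := by
    intro s t hst
    rw [hαr]
    exact (div_lt_div_iff_of_pos_right hnR).mpr (by nlinarith [(show (s:ℝ) < t by exact_mod_cast hst)])
  have hshift : ∀ k : ℕ, αr (k + n) = αr k + 2*π := by
    intro k
    rw [hαr]
    push_cast
    field_simp
  constructor
  · intro hd
    rintro ⟨a, b, c, d, hab, hbc, hcd, hor⟩
    have hdn : d < n := by
      rcases hor with ⟨_,_,_,h⟩|⟨_,_,_,h⟩
      · exact hB'sub h
      · exact hBsub h
    obtain ⟨p, hp1, hp2⟩ := chords_meet (hsmono _ _ hab) (hsmono _ _ hbc) (hsmono _ _ hcd)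
      (by rw [← hshift a]; exact hsmono _ _ (by omega))
    have ea : vtx n a = Complex.exp (((αr a : ℝ):ℂ) * Complex.I) := vtx_angle n a a hn 0 (by ring)
    have eb : vtx n b = Complex.exp (((αr b : ℝ):ℂ) * Complex.I) := vtx_angle n b b hn 0 (by ring)
    have ec : vtx n c = Complex.exp (((αr c : ℝ):ℂ) * Complex.I) := vtx_angle n c c hn 0 (by ring)
    have ed : vtx n d = Complex.exp (((αr d : ℝ):ℂ) * Complex.I) := vtx_angle n d d hn 0 (by ring)
    rw [← ea, ← ec] at hp1
    rw [← eb, ← ed] at hp2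
    rcases hor with ⟨haB, hcB, hbB', hdB'⟩ | ⟨haB', hcB', hbB, hdB⟩
    · have hpB : p ∈ convexHull ℝ (vtx n '' B) :=
        segment_subset_convexHull (Set.mem_image_of_mem _ haB) (Set.mem_image_of_mem _ hcB) hp1
      have hpB' : p ∈ convexHull ℝ (vtx n '' B') :=
        segment_subset_convexHull (Set.mem_image_of_mem _ hbB') (Set.mem_image_of_mem _ hdB') hp2
      exact Set.disjoint_left.mp hd hpB hpB'
    · have hpB' : p ∈ convexHull ℝ (vtx n '' B') :=
        segment_subset_convexHull (Set.mem_image_of_mem _ haB') (Set.mem_image_of_mem _ hcB') hp1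
      have hpB : p ∈ convexHull ℝ (vtx n '' B) :=
        segment_subset_convexHull (Set.mem_image_of_mem _ hbB) (Set.mem_image_of_mem _ hdB) hp2
      exact Set.disjoint_left.mp hd hpB hpB'
  · intro hnc
    obtain ⟨m', hm'B'⟩ := hB'ne
    have hm' : m' < n := hB'sub hm'B'
    have hBfin : B.Finite := (Set.finite_Iio n).subset hBsub
    obtain ⟨kmin, hkminB, hmin⟩ := Set.exists_min_image B (cutKey n m') hBfin hBne
    obtain ⟨kmax, hkmaxB, hmax⟩ := Set.exists_max_image B (cutKey n m') hBfin hBne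
    have hkminn : kmin < n := hBsub hkminB
    have hkmaxn : kmax < n := hBsub hkmaxB
    set K1 := cutKey n m' kmin with hK1
    set K2 := cutKey n m' kmax with hK2
    have hK12 : K1 ≤ K2 := hmin kmax hkmaxB
    have hK2n : K2 < n := cutKey_lt hm' hkmaxn
    have hK2top : K2 < n - 1 := by
      rcases Nat.lt_or_ge K2 (n-1) with h|h
      · exact h
      · exfalso
        have hEq : cutKey n m' kmax = cutKey n m' m' := by
          rw [cutKey_self hm', ← hK2]; omega
        have hkm : kmax = m' := cutKey_inj hm' hkmaxn hm' hEq
        rw [← hkm] at hm'B'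
        exact Set.disjoint_left.mp hdisj hkmaxB hm'B'
    have hout : ∀ b' ∈ B', cutKey n m' b' < K1 ∨ K2 < cutKey n m' b' := by
      intro b' hb'
      by_contra hcon
      push_neg at hcon
      obtain ⟨hge, hle⟩ := hcon
      have hb'n : b' < n := hB'sub hb'
      have hne1 : cutKey n m' b' ≠ K1 := by
        intro h
        have hbk : b' = kmin := cutKey_inj hm' hb'n hkminn (h.trans hK1)
        subst hbk
        exact Set.disjoint_left.mp hdisj hkminB hb'
      have hne2 : cutKey n m' b' ≠ K2 := by
        intro h
        have hbk : b' = kmax := cutKey_inj hm' hb'n hkmaxn (h.trans hK2)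
        subst hbk
        exact Set.disjoint_left.mp hdisj hkmaxB hb'
      exact hnc (extract n m' hm' hkminn hb'n hkmaxn (by omega) (by omega) (by omega)
        hkminB hb' hkmaxB hm'B')
    obtain ⟨ψ, r, hlt, hgt⟩ := sep (a := αr (K1 + m' + 1)) (b := αr (K2 + m' + 1))
      (c := αr (K2 + m' + 2)) (d := αr (K1 + m' + n))
      (hmono _ _ (by omega)) (hsmono _ _ (by omega)) (hmono _ _ (by omega))
      (by rw [show K1 + m' + n = (K1 + m' + 1) + (n - 1) by omega]
          rw [show (K1 + m' + 1) + (n-1) = (K1 + m') + n by omega]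
          rw [show αr (K1 + m' + 1) + 2*π = αr (K1 + m' + 1 + n) by rw [hshift]]
          exact hsmono _ _ (by omega))
    have hBhalf : ∀ z ∈ vtx n '' B, gfun ψ z < r := by
      rintro _ ⟨x, hxB, rfl⟩
      have hxn : x < n := hBsub hxB
      have hx1 : K1 ≤ cutKey n m' x := hmin x hxB
      have hx2 : cutKey n m' x ≤ K2 := hmax x hxB
      have hcase : cutKey n m' x + m' + 1 = x + 0*n ∨ cutKey n m' x + m' + 1 = x + 1*n := by
        unfold cutKey; split_ifs <;> omega
      have hvx : vtx n x = Complex.exp (((αr (cutKey n m' x + m' + 1) : ℝ):ℂ) * Complex.I) := by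
        rcases hcase with h|h
        · exact vtx_angle n x _ hn 0 h
        · exact vtx_angle n x _ hn 1 h
      rw [hvx, gfun_exp]
      exact hlt _ (hmono _ _ (by omega)) (hmono _ _ (by omega))
    have hB'half : ∀ z ∈ vtx n '' B', r < gfun ψ z := by
      rintro _ ⟨x, hxB', rfl⟩
      have hxn : x < n := hB'sub hxB'
      rcases hout x hxB' with hlo | hhi
      · have hcase : cutKey n m' x + m' + 1 + n = x + 1*n ∨
            cutKey n m' x + m' + 1 + n = x + 2*n := by
          unfold cutKey; split_ifs <;> omega
        have hvx : vtx n x =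
            Complex.exp (((αr (cutKey n m' x + m' + 1 + n) : ℝ):ℂ) * Complex.I) := by
          rcases hcase with h|h
          · exact vtx_angle n x _ hn 1 h
          · exact vtx_angle n x _ hn 2 h
        rw [hvx, gfun_exp]
        exact hgt _ (hmono _ _ (by omega)) (hmono _ _ (by omega))
      · have hkn : cutKey n m' x < n := cutKey_lt hm' hxn
        have hcase : cutKey n m' x + m' + 1 = x + 0*n ∨ cutKey n m' x + m' + 1 = x + 1*n := by
          unfold cutKey; split_ifs <;> omega
        have hvx : vtx n x = Complex.exp (((αr (cutKey n m' x + m' + 1) : ℝ):ℂ) * Complex.I) := by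
          rcases hcase with h|h
          · exact vtx_angle n x _ hn 0 h
          · exact vtx_angle n x _ hn 1 h
        rw [hvx, gfun_exp]
        exact hgt _ (hmono _ _ (by omega)) (hmono _ _ (by omega))
    have hull1 : convexHull ℝ (vtx n '' B) ⊆ {z | gfun ψ z < r} :=
      convexHull_min hBhalf (convex_halfSpace_lt (gfun_linear ψ) r)
    have hull2 : convexHull ℝ (vtx n '' B') ⊆ {z | r < gfun ψ z} :=
      convexHull_min hB'half (convex_halfSpace_gt (gfun_linear ψ) r)
    refine Set.disjoint_left.mpr fun {z} hz1 hz2 => ?_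
    have l1 : gfun ψ z < r := hull1 hz1
    have l2 : r < gfun ψ z := hull2 hz2
    linarith
end

section
/- Let (A_m)_{m≥1} be a sequence of laminations of the closed unit disk converging, in the Hausdorff metric, to a nonempty closed subset A of the closed unit disk. Then A is a lamination of the closed unit disk. -/
namespace LamStatement16Aux

open Set Filter Metric

/-- planar cross product of complex numbers viewed as vectors in ℝ². -/
def cr (a b : ℂ) : ℝ := a.re * b.im - a.im * b.re

lemma smul_re (r : ℝ) (z : ℂ) : (r • z).re = r * z.re := by simp [Complex.real_smul]
lemma smul_im (r : ℝ) (z : ℂ) : (r • z).im = r * z.im := by simp [Complex.real_smul]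

lemma norm_sq_eq {w : ℂ} (h : ‖w‖ = 1) : w.re ^ 2 + w.im ^ 2 = 1 := by
  have : ‖w‖ ^ 2 = 1 := by rw [h]; ring
  rw [Complex.sq_norm, Complex.normSq_apply] at this; nlinarith [this]

lemma quad_roots {zr zi dr di u1 u2 u3 : ℝ} (hd : dr ^ 2 + di ^ 2 ≠ 0)
    (h1 : (zr + u1 * dr) ^ 2 + (zi + u1 * di) ^ 2 = 1)
    (h2 : (zr + u2 * dr) ^ 2 + (zi + u2 * di) ^ 2 = 1)
    (h3 : (zr + u3 * dr) ^ 2 + (zi + u3 * di) ^ 2 = 1)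
    (h12 : u1 ≠ u2) : u3 = u1 ∨ u3 = u2 := by
  by_contra h
  push_neg at h
  obtain ⟨ha, hb⟩ := h
  have k1 : (u3 - u1) * ((dr ^ 2 + di ^ 2) * (u3 + u1) + 2 * (zr * dr + zi * di)) = 0 := by
    linear_combination h3 - h1
  have k2 : (u3 - u2) * ((dr ^ 2 + di ^ 2) * (u3 + u2) + 2 * (zr * dr + zi * di)) = 0 := by
    linear_combination h3 - h2
  have k1' := (mul_eq_zero.mp k1).resolve_left (sub_ne_zero.mpr ha)
  have k2' := (mul_eq_zero.mp k2).resolve_left (sub_ne_zero.mpr hb)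
  have : (dr ^ 2 + di ^ 2) * (u1 - u2) = 0 := by linear_combination k1' - k2'
  exact h12 (by have := (mul_eq_zero.mp this).resolve_left hd; linarith)

lemma seg_param {p q z : ℂ} (hz : z ∈ segment ℝ p q) :
    ∃ s : ℝ, 0 ≤ s ∧ s ≤ 1 ∧ z = p + s • (q - p) := by
  rw [segment_eq_image'] at hz
  obtain ⟨s, hs, hzz⟩ := hz
  exact ⟨s, hs.1, hs.2, hzz.symm⟩

lemma mem_seg_of_param {p q : ℂ} {s : ℝ} (h0 : 0 ≤ s) (h1 : s ≤ 1) :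
    p + s • (q - p) ∈ segment ℝ p q := by
  rw [segment_eq_image']
  exact ⟨s, ⟨h0, h1⟩, rfl⟩

lemma cramer (w d d' : ℂ) (hD : cr d d' ≠ 0) :
    (cr w d' / cr d d') • d - (cr w d / cr d d') • d' = w := by
  rw [Complex.ext_iff]
  constructor <;>
  · simp only [Complex.sub_re, Complex.sub_im, smul_re, smul_im]
    field_simp
    simp only [cr]
    ring

lemma cr_self (a : ℂ) : cr a a = 0 := by simp [cr, mul_comm]

lemma cr_smul_right (a b : ℂ) (r : ℝ) : cr a (r • b) = r * cr a b := by
  simp only [cr, smul_re, smul_im]; ring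

lemma seg_eq_implies_cr_zero {p q p' q' : ℂ} (h : segment ℝ p q = segment ℝ p' q') :
    cr (q - p) (q' - p') = 0 := by
  have h1 : p' ∈ segment ℝ p q := h ▸ left_mem_segment ℝ p' q'
  have h2 : q' ∈ segment ℝ p q := h ▸ right_mem_segment ℝ p' q'
  obtain ⟨a, _, _, ha⟩ := seg_param h1
  obtain ⟨b, _, _, hb⟩ := seg_param h2
  have hd : q' - p' = (b - a) • (q - p) := by rw [ha, hb]; module
  rw [hd, cr_smul_right, cr_self, mul_zero]

def Dq (x : (ℂ × ℂ) × (ℂ × ℂ)) : ℝ := cr (x.1.2 - x.1.1) (x.2.2 - x.2.1)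
noncomputable def sfq (x : (ℂ × ℂ) × (ℂ × ℂ)) : ℝ :=
  cr (x.2.1 - x.1.1) (x.2.2 - x.2.1) / Dq x
noncomputable def tfq (x : (ℂ × ℂ) × (ℂ × ℂ)) : ℝ :=
  cr (x.2.1 - x.1.1) (x.1.2 - x.1.1) / Dq x
noncomputable def zq (x : (ℂ × ℂ) × (ℂ × ℂ)) : ℂ := x.1.1 + (sfq x) • (x.1.2 - x.1.1)

lemma continuous_Dq : Continuous Dq := by unfold Dq cr; fun_prop
lemma continuousAt_sfq {x} (h : Dq x ≠ 0) : ContinuousAt sfq x := by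
  apply ContinuousAt.div _ continuous_Dq.continuousAt h
  have : Continuous fun y : (ℂ × ℂ) × (ℂ × ℂ) => cr (y.2.1 - y.1.1) (y.2.2 - y.2.1) := by
    unfold cr; fun_prop
  exact this.continuousAt
lemma continuousAt_tfq {x} (h : Dq x ≠ 0) : ContinuousAt tfq x := by
  apply ContinuousAt.div _ continuous_Dq.continuousAt h
  have : Continuous fun y : (ℂ × ℂ) × (ℂ × ℂ) => cr (y.2.1 - y.1.1) (y.1.2 - y.1.1) := by
    unfold cr; fun_prop
  exact this.continuousAt
lemma continuousAt_zq {x} (h : Dq x ≠ 0) : ContinuousAt zq x := by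
  unfold zq
  have h1 : ContinuousAt (fun y : (ℂ × ℂ) × (ℂ × ℂ) => y.1.1) x := by fun_prop
  have h2 : ContinuousAt (fun y : (ℂ × ℂ) × (ℂ × ℂ) => y.1.2 - y.1.1) x := by fun_prop
  exact h1.add ((continuousAt_sfq h).smul h2)

set_option maxHeartbeats 1000000 in
/-- key nondegeneracy: transversal crossing -/
lemma crossing_nondeg {p q p' q' z : ℂ}
    (hp : ‖p‖ = 1) (hq : ‖q‖ = 1) (hp' : ‖p'‖ = 1) (hq' : ‖q'‖ = 1)
    (hne : segment ℝ p q ≠ segment ℝ p' q')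
    (hz1 : z ∈ segment ℝ p q) (hz2 : z ∈ segment ℝ p' q') (hz : ‖z‖ < 1) :
    ∃ s t : ℝ, 0 < s ∧ s < 1 ∧ 0 < t ∧ t < 1 ∧
      z = p + s • (q - p) ∧ z = p' + t • (q' - p') ∧ cr (q - p) (q' - p') ≠ 0 := by
  obtain ⟨s, hs0, hs1, hzs⟩ := seg_param hz1
  obtain ⟨t, ht0, ht1, hzt⟩ := seg_param hz2
  -- strictness
  have hs0' : 0 < s := by
    rcases hs0.lt_or_eq with h | h; · exact h
    exfalso
    have hzp : z = p := by rw [hzs, ← h]; simp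
    rw [hzp, hp] at hz; linarith
  have hs1' : s < 1 := by
    rcases hs1.lt_or_eq with h | h; · exact h
    exfalso
    have hzq : z = q := by rw [hzs, h]; simp
    rw [hzq, hq] at hz; linarith
  have ht0' : 0 < t := by
    rcases ht0.lt_or_eq with h | h; · exact h
    exfalso
    have hzp : z = p' := by rw [hzt, ← h]; simp
    rw [hzp, hp'] at hz; linarith
  have ht1' : t < 1 := by
    rcases ht1.lt_or_eq with h | h; · exact h
    exfalso
    have hzq : z = q' := by rw [hzt, h]; simp
    rw [hzq, hq'] at hz; linarith
  refine ⟨s, t, hs0', hs1', ht0', ht1', hzs, hzt, ?_⟩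
  -- suppose cross product vanishes
  intro hcr
  set d := q - p with hd
  set d' := q' - p' with hd'
  have hdne : d ≠ 0 := by
    intro h0
    have hpq : q = p := by rwa [hd, sub_eq_zero] at h0
    have hzp : z = p := by rw [hzs, h0]; simp
    rw [hzp, hp] at hz; linarith
  have hdne' : d' ≠ 0 := by
    intro h0
    have hzp : z = p' := by rw [hzt, h0]; simp
    rw [hzp, hp'] at hz; linarith
  -- d' is a real multiple of d
  have hA : d.re ^ 2 + d.im ^ 2 ≠ 0 := by
    intro h
    apply hdne
    have h1 : d.re = 0 := by nlinarith [sq_nonneg d.re, sq_nonneg d.im]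
    have h2 : d.im = 0 := by nlinarith [sq_nonneg d.re, sq_nonneg d.im]
    exact Complex.ext h1 h2
  have hcr' : d.re * d'.im - d.im * d'.re = 0 := hcr
  obtain ⟨lam, hre, him⟩ : ∃ lam : ℝ, d'.re = lam * d.re ∧ d'.im = lam * d.im := by
    refine ⟨(d.re * d'.re + d.im * d'.im) / (d.re ^ 2 + d.im ^ 2), ?_, ?_⟩
    · field_simp; linear_combination (-d.im) * hcr'
    · field_simp; linear_combination d.re * hcr'
  have hd'eq : d' = lam • d := by
    apply Complex.ext
    · rw [smul_re]; exact hre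
    · rw [smul_im]; exact him
  have hlamne : lam ≠ 0 := by
    intro h; apply hdne'; rw [hd'eq, h, zero_smul]
  -- express the four endpoints as z + u • d
  have hpz : p = z + (-s) • d := by rw [hzs]; module
  have hqz : q = z + (1 - s) • d := by
    rw [hzs, hd]; module
  have hp'z : p' = z + (-(t * lam)) • d := by rw [hzt, hd'eq]; module
  have hq'z : q' = z + ((1 - t) * lam) • d := by
    have : q' = p' + d' := by rw [hd']; ring
    rw [this, hp'z, hd'eq]; module
  -- circle equations
  have key : ∀ (u : ℝ) (w : ℂ), ‖w‖ = 1 → w = z + u • d →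
      (z.re + u * d.re) ^ 2 + (z.im + u * d.im) ^ 2 = 1 := by
    intro u w hw hweq
    have hn := norm_sq_eq hw
    rw [hweq] at hn
    simpa [Complex.add_re, Complex.add_im, smul_re, smul_im] using hn
  have e1 := key (-s) p hp hpz
  have e2 := key (1 - s) q hq hqz
  have e3 := key (-(t * lam)) p' hp' hp'z
  have e4 := key ((1 - t) * lam) q' hq' hq'z
  have hu12 : (-s : ℝ) ≠ 1 - s := by intro h; linarith
  have r3 := quad_roots hA e1 e2 e3 hu12
  have r4 := quad_roots hA e1 e2 e4 hu12
  have hu34 : -(t * lam) ≠ (1 - t) * lam := by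
    intro h; apply hlamne; ring_nf at h; linarith
  rcases r3 with h3 | h3 <;> rcases r4 with h4 | h4
  · exact hu34 (h3.trans h4.symm)
  · apply hne
    have hp'p : p' = p := by rw [hp'z, h3]; exact hpz.symm
    have hq'q : q' = q := by rw [hq'z, h4]; exact hqz.symm
    rw [hp'p, hq'q]
  · apply hne
    have hp'q : p' = q := by rw [hp'z, h3]; exact hqz.symm
    have hq'p : q' = p := by rw [hq'z, h4]; exact hpz.symm
    rw [hp'q, hq'p]
    exact segment_symm ℝ p q
  · exact hu34 (h3.trans h4.symm)

set_option maxHeartbeats 1000000 in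
lemma crossing_stable {p q p' q' z : ℂ}
    (hp : ‖p‖ = 1) (hq : ‖q‖ = 1) (hp' : ‖p'‖ = 1) (hq' : ‖q'‖ = 1)
    (hne : segment ℝ p q ≠ segment ℝ p' q')
    (hz1 : z ∈ segment ℝ p q) (hz2 : z ∈ segment ℝ p' q') (hz : ‖z‖ < 1) :
    ∃ ε > 0, ∀ e e' : ℂ × ℂ, dist e (p, q) < ε → dist e' (p', q') < ε →
      segment ℝ e.1 e.2 ≠ segment ℝ e'.1 e'.2 ∧
      ((segment ℝ e.1 e.2 ∩ Metric.ball (0 : ℂ) 1) ∩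
        (segment ℝ e'.1 e'.2 ∩ Metric.ball (0 : ℂ) 1)).Nonempty := by
  obtain ⟨s, t, hs0, hs1, ht0, ht1, hzs, hzt, hcr⟩ :=
    crossing_nondeg hp hq hp' hq' hne hz1 hz2 hz
  have hw : p' - p = s • (q - p) - t • (q' - p') := by
    have h := hzs.symm.trans hzt
    rw [Complex.real_smul, Complex.real_smul] at h ⊢
    linear_combination (-1 : ℂ) * h
  set x0 : (ℂ × ℂ) × (ℂ × ℂ) := ((p, q), (p', q')) with hx0
  have hD0 : Dq x0 = cr (q - p) (q' - p') := rfl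
  have hD0ne : Dq x0 ≠ 0 := by rw [hD0]; exact hcr
  have hsD : cr (p' - p) (q' - p') = s * cr (q - p) (q' - p') := by
    rw [hw]
    simp only [cr, Complex.sub_re, Complex.sub_im, smul_re, smul_im]
    ring
  have htD : cr (p' - p) (q - p) = t * cr (q - p) (q' - p') := by
    rw [hw]
    simp only [cr, Complex.sub_re, Complex.sub_im, smul_re, smul_im]
    ring
  have hsf0 : sfq x0 = s := by
    show cr (p' - p) (q' - p') / Dq x0 = s
    rw [hD0, hsD]
    exact mul_div_cancel_right₀ s hcr
  have htf0 : tfq x0 = t := by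
    show cr (p' - p) (q - p) / Dq x0 = t
    rw [hD0, htD]
    exact mul_div_cancel_right₀ t hcr
  have hz0 : zq x0 = z := by
    show p + sfq x0 • (q - p) = z
    rw [hsf0]; exact hzs.symm
  -- eventual conditions
  have h1 : ∀ᶠ x in nhds x0, Dq x ≠ 0 := continuous_Dq.continuousAt.eventually_ne hD0ne
  have h2 : ∀ᶠ x in nhds x0, 0 < sfq x :=
    (continuousAt_sfq hD0ne) (Ioi_mem_nhds (by rw [hsf0]; exact hs0))
  have h3 : ∀ᶠ x in nhds x0, sfq x < 1 :=
    (continuousAt_sfq hD0ne) (Iio_mem_nhds (by rw [hsf0]; exact hs1))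
  have h4 : ∀ᶠ x in nhds x0, 0 < tfq x :=
    (continuousAt_tfq hD0ne) (Ioi_mem_nhds (by rw [htf0]; exact ht0))
  have h5 : ∀ᶠ x in nhds x0, tfq x < 1 :=
    (continuousAt_tfq hD0ne) (Iio_mem_nhds (by rw [htf0]; exact ht1))
  have h6 : ∀ᶠ x in nhds x0, ‖zq x‖ < 1 :=
    ((continuousAt_zq hD0ne).norm) (Iio_mem_nhds (by show ‖zq x0‖ < 1; rw [hz0]; exact hz))
  have hev := h1.and (h2.and (h3.and (h4.and (h5.and h6))))
  rw [Metric.eventually_nhds_iff] at hev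
  obtain ⟨ε, hε, hball⟩ := hev
  refine ⟨ε, hε, ?_⟩
  intro e e' he he'
  have hx : dist ((e, e')) x0 < ε := by
    rw [Prod.dist_eq]; exact max_lt he he'
  obtain ⟨hD1, hs1', hs2', ht1', ht2', hζ1⟩ := hball hx
  have hD1' : cr (e.2 - e.1) (e'.2 - e'.1) ≠ 0 := hD1
  constructor
  · intro hEq
    exact hD1' (seg_eq_implies_cr_zero hEq)
  · refine ⟨zq (e, e'), ⟨?_, ?_⟩, ?_, ?_⟩
    · exact mem_seg_of_param (le_of_lt hs1') (le_of_lt hs2')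
    · exact mem_ball_zero_iff.mpr hζ1
    · -- zq (e,e') ∈ segment e'.1 e'.2
      have hcram := cramer (e'.1 - e.1) (e.2 - e.1) (e'.2 - e'.1) hD1'
      have hkey : zq (e, e') = e'.1 + tfq (e, e') • (e'.2 - e'.1) := by
        show e.1 + sfq (e, e') • (e.2 - e.1) = e'.1 + tfq (e, e') • (e'.2 - e'.1)
        have hsf : sfq (e, e') = cr (e'.1 - e.1) (e'.2 - e'.1) / cr (e.2 - e.1) (e'.2 - e'.1) :=
          rfl
        have htf : tfq (e, e') = cr (e'.1 - e.1) (e.2 - e.1) / cr (e.2 - e.1) (e'.2 - e'.1) :=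
          rfl
        rw [hsf, htf]
        rw [Complex.real_smul, Complex.real_smul] at hcram ⊢
        linear_combination hcram
      rw [hkey]
      exact mem_seg_of_param (le_of_lt ht1') (le_of_lt ht2')
    · exact mem_ball_zero_iff.mpr hζ1

end LamStatement16Aux


/-- Let `(A_m)` be a sequence of laminations of the closed unit disk
converging, in the Hausdorff metric, to a nonempty closed subset `L` of the closed unit
disk. Then `L` is a lamination of the closed unit disk. -/
theorem isLamination_of_tendsto (A : ℕ → Set ℂ) (hA : ∀ m, 1 ≤ m → IsLamination (A m))
    (L : Set ℂ) (hLclosed : IsClosed L) (hLsub : L ⊆ Metric.closedBall (0 : ℂ) 1)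
    (hLne : L.Nonempty)
    (hconv : Filter.Tendsto (fun m => EMetric.hausdorffEdist (A m) L)
      Filter.atTop (nhds 0)) :
    IsLamination L := by
  classical
  open Set Filter Metric LamStatement16Aux in
  refine ⟨hLclosed, hLsub, ?_⟩
  have hCm : ∀ m, 1 ≤ m → ∃ Cm : Set (ℂ × ℂ),
      (∀ p ∈ Cm, ‖p.1‖ = 1 ∧ ‖p.2‖ = 1) ∧
      A m = ⋃ p ∈ Cm, segment ℝ p.1 p.2 ∧
      (∀ p ∈ Cm, ∀ q ∈ Cm, segment ℝ p.1 p.2 ≠ segment ℝ q.1 q.2 →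
        Disjoint (segment ℝ p.1 p.2 ∩ Metric.ball (0 : ℂ) 1)
          (segment ℝ q.1 q.2 ∩ Metric.ball (0 : ℂ) 1)) :=
    fun m hm => (hA m hm).2.2
  choose! Cm hnorm hcov hdisj using hCm
  set U : Ultrafilter ℕ := Ultrafilter.of Filter.atTop with hUdef
  have hU : (U : Filter ℕ) ≤ Filter.atTop := Ultrafilter.of_le _
  set C : Set (ℂ × ℂ) :=
    {cp | ∀ ε > (0 : ℝ), ∀ᶠ m in (U : Filter ℕ), 1 ≤ m ∧ ∃ c ∈ Cm m, dist c cp < ε} with hC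
  -- (1) endpoints of chords of C are on the circle
  have hCnorm : ∀ cp ∈ C, ‖cp.1‖ = 1 ∧ ‖cp.2‖ = 1 := by
    intro cp hcp
    have key : ∀ ε > (0 : ℝ), ∃ c : ℂ × ℂ, (‖c.1‖ = 1 ∧ ‖c.2‖ = 1) ∧ dist c cp < ε := by
      intro ε hε
      obtain ⟨m, hm1, c, hcCm, hd⟩ := (hcp ε hε).exists
      exact ⟨c, hnorm m hm1 c hcCm, hd⟩
    constructor
    · by_contra hne1
      obtain ⟨c, ⟨hc1, _⟩, hd⟩ := key (|‖cp.1‖ - 1|) (abs_pos.mpr (sub_ne_zero.mpr hne1))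
      have hle : dist c.1 cp.1 ≤ dist c cp := by rw [Prod.dist_eq]; exact le_max_left _ _
      have h2 : |‖cp.1‖ - 1| ≤ dist c.1 cp.1 := by
        rw [← hc1]
        calc |‖cp.1‖ - ‖c.1‖| ≤ ‖cp.1 - c.1‖ := abs_norm_sub_norm_le _ _
          _ = dist c.1 cp.1 := by rw [dist_comm, dist_eq_norm]
      linarith
    · by_contra hne1
      obtain ⟨c, ⟨_, hc2⟩, hd⟩ := key (|‖cp.2‖ - 1|) (abs_pos.mpr (sub_ne_zero.mpr hne1))
      have hle : dist c.2 cp.2 ≤ dist c cp := by rw [Prod.dist_eq]; exact le_max_right _ _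
      have h2 : |‖cp.2‖ - 1| ≤ dist c.2 cp.2 := by
        rw [← hc2]
        calc |‖cp.2‖ - ‖c.2‖| ≤ ‖cp.2 - c.2‖ := abs_norm_sub_norm_le _ _
          _ = dist c.2 cp.2 := by rw [dist_comm, dist_eq_norm]
      linarith
  -- (2) chords of C are contained in L
  have hCsub : ∀ cp ∈ C, segment ℝ cp.1 cp.2 ⊆ L := by
    intro cp hcp y hy
    obtain ⟨r, hr0, hr1, hyr⟩ := seg_param hy
    rw [← hLclosed.closure_eq, Metric.mem_closure_iff]
    intro ε hε
    have hev1 : ∀ᶠ m in (U : Filter ℕ),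
        EMetric.hausdorffEdist (A m) L < ENNReal.ofReal (ε / 4) :=
      (hconv.eventually_lt_const (ENNReal.ofReal_pos.mpr (by linarith))).filter_mono hU
    have hev2 := hcp (ε / 4) (by linarith)
    obtain ⟨m, ⟨hm1, c, hcCm, hdc⟩, hHd⟩ := (hev2.and hev1).exists
    have hy'A : c.1 + r • (c.2 - c.1) ∈ A m := by
      rw [hcov m hm1]
      exact Set.mem_biUnion hcCm (mem_seg_of_param hr0 hr1)
    have d1 : ‖c.1 - cp.1‖ < ε / 4 := by
      rw [← dist_eq_norm]
      exact lt_of_le_of_lt (by rw [Prod.dist_eq]; exact le_max_left _ _) hdc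
    have d2 : ‖c.2 - cp.2‖ < ε / 4 := by
      rw [← dist_eq_norm]
      exact lt_of_le_of_lt (by rw [Prod.dist_eq]; exact le_max_right _ _) hdc
    have hyy' : dist (c.1 + r • (c.2 - c.1)) y ≤ ε / 4 := by
      have hid : c.1 + r • (c.2 - c.1) - y = (1 - r) • (c.1 - cp.1) + r • (c.2 - cp.2) := by
        rw [hyr]; module
      rw [dist_eq_norm, hid]
      calc ‖(1 - r) • (c.1 - cp.1) + r • (c.2 - cp.2)‖
          ≤ ‖(1 - r) • (c.1 - cp.1)‖ + ‖r • (c.2 - cp.2)‖ := norm_add_le _ _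
        _ = (1 - r) * ‖c.1 - cp.1‖ + r * ‖c.2 - cp.2‖ := by
            rw [norm_smul, norm_smul, Real.norm_of_nonneg (by linarith),
              Real.norm_of_nonneg hr0]
        _ ≤ (1 - r) * (ε / 4) + r * (ε / 4) := by
            have := d1.le; have := d2.le
            nlinarith
        _ = ε / 4 := by ring
    have hinf : EMetric.infEdist (c.1 + r • (c.2 - c.1)) L < ENNReal.ofReal (ε / 4) :=
      lt_of_le_of_lt (EMetric.infEdist_le_hausdorffEdist_of_mem hy'A) hHd
    obtain ⟨zz, hzzL, hzzd⟩ := EMetric.infEdist_lt_iff.mp hinf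
    refine ⟨zz, hzzL, ?_⟩
    have hd2 : dist (c.1 + r • (c.2 - c.1)) zz < ε / 4 := edist_lt_ofReal.mp hzzd
    calc dist y zz ≤ dist y (c.1 + r • (c.2 - c.1)) + dist (c.1 + r • (c.2 - c.1)) zz :=
          dist_triangle _ _ _
      _ < ε / 4 + ε / 4 := by rw [dist_comm y]; exact add_lt_add_of_le_of_lt hyy' hd2
      _ < ε := by linarith
  -- (3) every point of L lies on a chord of C
  have hLcov : ∀ x ∈ L, ∃ cp ∈ C, x ∈ segment ℝ cp.1 cp.2 := by
    intro x hx
    set θ : ℕ → ℝ := fun m => (EMetric.hausdorffEdist (A m) L).toReal + 1 / (m + 1) with hθdef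
    have hθ0 : Filter.Tendsto θ Filter.atTop (nhds 0) := by
      have h1 : Filter.Tendsto (fun m => (EMetric.hausdorffEdist (A m) L).toReal)
          Filter.atTop (nhds 0) := by
        have h2 := (ENNReal.tendsto_toReal (by simp : (0 : ENNReal) ≠ ⊤)).comp hconv
        simpa [Function.comp_def] using h2
      have h2 : Filter.Tendsto (fun m : ℕ => 1 / ((m : ℝ) + 1)) Filter.atTop (nhds 0) :=
        tendsto_one_div_add_atTop_nhds_zero_nat
      have h3 := h1.add h2
      rw [hθdef]
      simpa [one_div] using h3
    set Q : ℕ → Prop := fun m => 1 ≤ m ∧ ∃ c ∈ Cm m, ∃ rr ∈ Set.Icc (0 : ℝ) 1,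
        dist (c.1 + rr • (c.2 - c.1)) x < θ m with hQdef
    have hQev : ∀ᶠ m in Filter.atTop, Q m := by
      have hfin : ∀ᶠ m in Filter.atTop, EMetric.hausdorffEdist (A m) L < 1 :=
        hconv.eventually_lt_const (by norm_num)
      filter_upwards [hfin, Filter.eventually_ge_atTop 1] with m hm1 hm2
      refine ⟨hm2, ?_⟩
      have hne : EMetric.hausdorffEdist (A m) L ≠ ⊤ := ne_top_of_lt hm1
      have hinf : EMetric.infEdist x (A m) ≤ EMetric.hausdorffEdist (A m) L := by
        rw [show EMetric.hausdorffEdist (A m) L = EMetric.hausdorffEdist L (A m) from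
          Metric.hausdorffEDist_comm]
        exact EMetric.infEdist_le_hausdorffEdist_of_mem hx
      have hθpos : (0 : ℝ) < 1 / ((m : ℝ) + 1) := by positivity
      have hlt : EMetric.infEdist x (A m) < ENNReal.ofReal (θ m) := by
        refine lt_of_le_of_lt hinf ?_
        conv_lhs => rw [← ENNReal.ofReal_toReal hne]
        rw [ENNReal.ofReal_lt_ofReal_iff (by positivity)]
        have := ENNReal.toReal_nonneg (a := EMetric.hausdorffEdist (A m) L)
        simp only [hθdef]
        linarith
      obtain ⟨yy, hyyA, hyyd⟩ := EMetric.infEdist_lt_iff.mp hlt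
      rw [hcov m hm2] at hyyA
      obtain ⟨c, hc, hyseg⟩ := Set.mem_iUnion₂.mp hyyA
      obtain ⟨rr, hrr0, hrr1, hyyr⟩ := seg_param hyseg
      refine ⟨c, hc, rr, ⟨hrr0, hrr1⟩, ?_⟩
      rw [← hyyr, dist_comm]
      exact edist_lt_ofReal.mp hyyd
    have hsel : ∀ m, ∃ crr : (ℂ × ℂ) × ℝ,
        crr.1.1 ∈ Metric.closedBall (0 : ℂ) 1 ∧ crr.1.2 ∈ Metric.closedBall (0 : ℂ) 1 ∧
        crr.2 ∈ Set.Icc (0 : ℝ) 1 ∧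
        (Q m → crr.1 ∈ Cm m ∧ dist (crr.1.1 + crr.2 • (crr.1.2 - crr.1.1)) x < θ m) := by
      intro m
      by_cases hQm : Q m
      · obtain ⟨hm1, c, hc, rr, hrr, hd⟩ := hQm
        have hn := hnorm m hm1 c hc
        refine ⟨(c, rr), ?_, ?_, hrr, fun _ => ⟨hc, hd⟩⟩
        · rw [Metric.mem_closedBall, dist_zero_right]; exact hn.1.le
        · rw [Metric.mem_closedBall, dist_zero_right]; exact hn.2.le
      · refine ⟨((1, 1), 0), ?_, ?_, ?_, fun h => absurd h hQm⟩
        · simp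
        · simp
        · simp
    choose g hg1 hg2 hg3 hg4 using hsel
    have hKcomp : IsCompact ((Metric.closedBall (0 : ℂ) 1 ×ˢ Metric.closedBall (0 : ℂ) 1) ×ˢ
        Set.Icc (0 : ℝ) 1) :=
      ((isCompact_closedBall _ _).prod (isCompact_closedBall _ _)).prod isCompact_Icc
    have hmem : ∀ m, g m ∈ (Metric.closedBall (0 : ℂ) 1 ×ˢ Metric.closedBall (0 : ℂ) 1) ×ˢ
        Set.Icc (0 : ℝ) 1 := fun m => ⟨⟨hg1 m, hg2 m⟩, hg3 m⟩
    obtain ⟨lim, hlimmem, hlim⟩ := hKcomp.ultrafilter_le_nhds (U.map g)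
      (by
        rw [le_principal_iff, Ultrafilter.mem_coe, Ultrafilter.mem_map]
        exact Filter.univ_mem' hmem)
    have hgt : Filter.Tendsto g (U : Filter ℕ) (nhds lim) := hlim
    have hQU : ∀ᶠ m in (U : Filter ℕ), Q m := hQev.filter_mono hU
    have hgc : Filter.Tendsto (fun m => (g m).1) (U : Filter ℕ) (nhds lim.1) :=
      (continuous_fst.tendsto lim).comp hgt
    have hcontH : Continuous (fun y : (ℂ × ℂ) × ℝ => y.1.1 + y.2 • (y.1.2 - y.1.1)) := by
      fun_prop
    have hyt : Filter.Tendsto (fun m => (g m).1.1 + (g m).2 • ((g m).1.2 - (g m).1.1))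
        (U : Filter ℕ) (nhds (lim.1.1 + lim.2 • (lim.1.2 - lim.1.1))) :=
      (hcontH.tendsto lim).comp hgt
    have hyx : Filter.Tendsto (fun m => (g m).1.1 + (g m).2 • ((g m).1.2 - (g m).1.1))
        (U : Filter ℕ) (nhds x) := by
      rw [Metric.tendsto_nhds]
      intro ε hε
      have hθε : ∀ᶠ m in (U : Filter ℕ), θ m < ε :=
        (hθ0.eventually_lt_const hε).filter_mono hU
      filter_upwards [hθε, hQU] with m h1 h2
      exact lt_trans (hg4 m h2).2 h1
    have hx_eq : lim.1.1 + lim.2 • (lim.1.2 - lim.1.1) = x := tendsto_nhds_unique hyt hyx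
    refine ⟨lim.1, ?_, by rw [← hx_eq]; exact mem_seg_of_param hlimmem.2.1 hlimmem.2.2⟩
    intro ε hε
    have hdist : ∀ᶠ m in (U : Filter ℕ), dist ((g m).1) lim.1 < ε :=
      Metric.tendsto_nhds.mp hgc ε hε
    filter_upwards [hdist, hQU] with m h1 h2
    exact ⟨h2.1, ⟨(g m).1, (hg4 m h2).1, h1⟩⟩
  -- (4) chords of C are pairwise non-crossing
  have hCdisj : ∀ cp ∈ C, ∀ cq ∈ C, segment ℝ cp.1 cp.2 ≠ segment ℝ cq.1 cq.2 →
      Disjoint (segment ℝ cp.1 cp.2 ∩ Metric.ball (0 : ℂ) 1)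
        (segment ℝ cq.1 cq.2 ∩ Metric.ball (0 : ℂ) 1) := by
    intro cp hcp cq hcq hne
    by_contra hnd
    rw [Set.not_disjoint_iff] at hnd
    obtain ⟨z, ⟨hz1, hzb⟩, hz2, hzb2⟩ := hnd
    obtain ⟨hn1, hn2⟩ := hCnorm cp hcp
    obtain ⟨hn3, hn4⟩ := hCnorm cq hcq
    obtain ⟨ε, hε, hstab⟩ :=
      crossing_stable hn1 hn2 hn3 hn4 hne hz1 hz2 (mem_ball_zero_iff.mp hzb)
    obtain ⟨m, ⟨hm1, c, hc, hdc⟩, _, c', hc', hdc'⟩ := ((hcp ε hε).and (hcq ε hε)).exists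
    obtain ⟨hneq, w, hw1, hw2⟩ :=
      hstab c c' (by simpa using hdc) (by simpa using hdc')
    exact Set.disjoint_left.mp (hdisj m hm1 c hc c' hc' hneq) hw1 hw2
  refine ⟨C, hCnorm, ?_, hCdisj⟩
  apply Set.Subset.antisymm
  · intro x hx
    obtain ⟨cp, hcp, hxseg⟩ := hLcov x hx
    exact Set.mem_biUnion hcp hxseg
  · exact Set.iUnion₂_subset hCsub
end

section
/- Let f : [0,1] → ℝ be continuous with f(0) = f(1) = 0 and f(r) > 0 for all r ∈ (0,1), and suppose that f takes distinct values at distinct local minimum points in (0,1) (i.e., if s ≠ t in (0,1) are both local minimum points of f, then f(s) ≠ f(t)). For each n ≥ 1, let Q_n be a noncrossing partition of {0, 1, …, n−1}, let ℓ^n be its encoding 2n-step Dyck path under the bijection Φ, and let L_n : [0,1] → ℝ be the piecewise-linear function with L_n(k/(2n)) = ℓ^n_k for 0 ≤ k ≤ 2n (linear on each interval [k/(2n), (k+1)/(2n)]). Suppose there exist positive reals a_n such that a_n·L_n converges to f uniformly on [0,1]. Then for all s, t ∈ [0,1] with s ∼_f t, the quantity sup over z in the segment [e^{2πis}, e^{2πit}]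 of the distance from z to the lamination Λ_n(Q_n) tends to 0 as n → ∞. -/
lemma dyck_parity {n : ℕ} {ℓ : ℕ → ℕ} (hd : IsDyckPath n ℓ) :
    ∀ k, k ≤ 2 * n → ℓ k % 2 = k % 2 := by
  intro k
  induction k with
  | zero => intro _; simp [hd.1]
  | succ k ih =>
    intro hk
    have h1 := ih (by omega)
    have h2 := hd.2.2 k (by omega)
    omega

lemma dyck_crossing {n : ℕ} {ℓ : ℕ → ℕ} (hd : IsDyckPath n ℓ)
    (h K₁ K₂ wa wb : ℕ)
    (hwa : wa ≤ K₁) (hK : K₁ ≤ K₂) (hwb : K₂ ≤ wb) (hwb2 : wb ≤ 2 * n)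
    (hla : ℓ wa ≤ h) (hlb : ℓ wb ≤ h)
    (hbar : ∀ k, K₁ ≤ k → k ≤ K₂ → h < ℓ k) :
    ∃ a b, wa ≤ a ∧ a < K₁ ∧ K₂ < b ∧ b ≤ wb ∧ ℓ a = h ∧ ℓ b = h ∧
      ∀ k, a < k → k < b → h < ℓ k := by
  classical
  set P : ℕ → Prop := fun k => ℓ k ≤ h with hP
  have hdecP : DecidablePred P := fun k => inferInstanceAs (Decidable (ℓ k ≤ h))
  set a := Nat.findGreatest P K₁ with hadef
  have haP : P a := Nat.findGreatest_spec hwa hla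
  have haK : a ≤ K₁ := Nat.findGreatest_le K₁
  have haltK : a < K₁ := by
    rcases lt_or_eq_of_le haK with h' | h'
    · exact h'
    · exfalso; have := hbar K₁ le_rfl hK; rw [h'] at haP; omega
  have hage : wa ≤ a := Nat.le_findGreatest hwa hla
  have hamax : ∀ k, a < k → k ≤ K₁ → h < ℓ k := by
    intro k h1 h2
    have := Nat.findGreatest_is_greatest (P := P) h1 h2
    simp only [hP, not_le] at this
    exact this
  have hstep : ∀ k, k < 2 * n → ℓ (k+1) ≤ ℓ k + 1 ∧ ℓ k ≤ ℓ (k+1) + 1 := by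
    intro k hk; have := hd.2.2 k hk; omega
  have hla2 : ℓ a = h := by
    have h1 : h < ℓ (a + 1) := hamax (a+1) (by omega) (by omega)
    have h2 := hstep a (by omega)
    omega
  -- b
  have hbex : ∃ k, K₂ ≤ k ∧ ℓ k ≤ h := ⟨wb, hwb, hlb⟩
  set b := Nat.find hbex with hbdef
  have hbspec : K₂ ≤ b ∧ ℓ b ≤ h := Nat.find_spec hbex
  have hble : b ≤ wb := Nat.find_min' hbex ⟨hwb, hlb⟩
  have hbmin : ∀ k, K₂ ≤ k → k < b → h < ℓ k := by
    intro k h1 h2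
    have := Nat.find_min hbex h2
    simp only [not_and, not_le] at this
    exact this h1
  have hbgt : K₂ < b := by
    rcases lt_or_eq_of_le hbspec.1 with h' | h'
    · exact h'
    · exfalso; have := hbar K₂ hK le_rfl; rw [h'] at this; omega
  have hlb2 : ℓ b = h := by
    have h1 : h < ℓ (b - 1) := hbmin (b-1) (by omega) (by omega)
    have h2 := hstep (b-1) (by omega)
    have : b - 1 + 1 = b := by omega
    rw [this] at h2
    omega
  refine ⟨a, b, hage, haltK, hbgt, hble, hla2, hlb2, ?_⟩
  intro k h1 h2
  rcases le_or_gt k K₁ with h3 | h3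
  · exact hamax k h1 h3
  rcases le_or_gt k K₂ with h4 | h4
  · exact hbar k (by omega) h4
  · exact hbmin k (by omega) h2


open Real

lemma vtx_eq_circlePt (n k : ℕ) : vtx n k = circlePt ((k : ℝ) / n) := by
  unfold vtx circlePt
  congr 1
  push_cast
  ring

lemma circlePt_dist (u v : ℝ) (h : 2 * π * |u - v| ≤ 1) :
    dist (circlePt u) (circlePt v) ≤ 4 * π * |u - v| := by
  have hsub : circlePt u - circlePt v
      = circlePt v * (Complex.exp (2 * π * Complex.I * ((u:ℂ) - v)) - 1) := by
    unfold circlePt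
    rw [mul_sub, ← Complex.exp_add]
    ring_nf
  have habs : ‖circlePt v‖ = 1 := by
    unfold circlePt
    rw [Complex.norm_exp]
    simp
  have hw : ‖2 * π * Complex.I * ((u:ℂ) - v)‖ = 2 * π * |u - v| := by
    rw [show ((u:ℂ) - v) = ((u - v : ℝ) : ℂ) by push_cast; ring]
    rw [norm_mul, norm_mul, norm_mul, Complex.norm_I, Complex.norm_two, Complex.norm_real,
      Complex.norm_real, Real.norm_eq_abs, Real.norm_eq_abs, abs_of_nonneg Real.pi_pos.le]
    ring
  rw [dist_eq_norm, hsub]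
  rw [norm_mul, habs, one_mul]
  calc ‖Complex.exp (2 * π * Complex.I * ((u:ℂ) - v)) - 1‖
      ≤ 2 * ‖2 * π * Complex.I * ((u:ℂ) - v)‖ :=
        Complex.norm_exp_sub_one_le (by rw [hw]; exact h)
    _ = 4 * π * |u - v| := by rw [hw]; ring

lemma vertex_mem_lamination {n : ℕ} {Q : Set (Set ℕ)} (hQ : IsPartitionOf n Q)
    {k : ℕ} (hk : k < n) : vtx n k ∈ lamination n Q := by
  obtain ⟨B, ⟨hB, hkB⟩, -⟩ := hQ.2.2 k hk
  refine Set.mem_biUnion hB ?_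
  unfold blockPolygon
  refine Set.mem_biUnion hkB ?_
  refine Set.mem_biUnion hkB ?_
  refine Set.mem_iUnion.2 ⟨⟨le_rfl, Or.inl fun k' _ h => by omega⟩, ?_⟩
  exact left_mem_segment ℝ _ _

lemma edge_sub_lamination {n : ℕ} {ℓ : ℕ → ℕ} {Q : Set (Set ℕ)}
    (hQ : dyckEvenClasses n ℓ = Q)
    {a b : ℕ} (ha2 : a % 2 = 0) (hb2 : b % 2 = 0) (hab : a ≤ b) (hbn : b < 2 * n)
    (heq : ℓ a = ℓ b) (hint : ∀ k, a < k → k < b → ℓ a < ℓ k) :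
    segment ℝ (vtx n (a / 2)) (vtx n (b / 2)) ⊆ lamination n Q := by
  have ha : 2 * (a / 2) = a := by omega
  have hb : 2 * (b / 2) = b := by omega
  have han : a / 2 < n := by omega
  have hbnn : b / 2 < n := by omega
  set B : Set ℕ := {i | i < n ∧ DyckRel n ℓ (2 * i) (2 * (a / 2))} with hBdef
  have hBQ : B ∈ Q := by
    rw [← hQ]; exact ⟨a / 2, han, rfl⟩
  have haB : a / 2 ∈ B := by
    refine ⟨han, ?_⟩
    rw [ha]
    exact ⟨by omega, by omega, rfl, fun k h1 h2 => by
      have : k = a := by simp at h1 h2; omega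
      simp [this]⟩
  have hbB : b / 2 ∈ B := by
    refine ⟨hbnn, ?_⟩
    rw [hb, ha]
    refine ⟨by omega, by omega, heq.symm, fun k h1 h2 => ?_⟩
    rw [min_comm, min_eq_left hab] at h1
    rw [max_comm, max_eq_right hab] at h2
    rcases eq_or_lt_of_le h1 with h' | h'
    · rw [← h', ← heq]
    rcases eq_or_lt_of_le h2 with h' | h''
    · rw [h']
    · rw [← heq]; exact le_of_lt (hint k h' h'')
  intro z hz
  refine Set.mem_biUnion hBQ ?_
  unfold blockPolygon
  refine Set.mem_biUnion haB ?_
  refine Set.mem_biUnion hbB ?_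
  refine Set.mem_iUnion.2 ⟨⟨by omega, Or.inl ?_⟩, hz⟩
  intro k hkB hcon
  have hrel := hkB.2
  have h1 : ℓ (2 * k) = ℓ a := by rw [ha] at hrel; exact hrel.2.2.1
  have := hint (2 * k) (by omega) (by omega)
  omega

open Filter Set Real

lemma grid_value {n : ℕ} {ℓn : ℕ → ℕ} {L : ℝ → ℝ}
    (hn : 1 ≤ n)
    (hL : ∀ k : ℕ, k < 2 * n → ∀ x : ℝ,
      x ∈ Set.Icc ((k : ℝ) / (2 * n)) (((k : ℝ) + 1) / (2 * n)) →
      L x = (ℓn k : ℝ) + ((2 * n : ℝ) * x - (k : ℝ)) * ((ℓn (k + 1) : ℝ) - (ℓn k : ℝ)))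
    (k : ℕ) (hk : k ≤ 2 * n) : L ((k : ℝ) / (2 * (n : ℝ))) = (ℓn k : ℝ) := by
  have hn' : (0:ℝ) < 2 * n := by positivity
  rcases eq_or_lt_of_le hk with hk2 | hk2
  · -- k = 2n, use interval [2n-1, 2n]
    subst hk2
    set K : ℕ := 2 * n - 1 with hK
    have heK : K + 1 = 2 * n := by omega
    have hcK : (K : ℝ) = 2 * (n:ℝ) - 1 := by
      have := congrArg (fun m : ℕ => (m : ℝ)) heK
      push_cast at this
      linarith
    have hx : ((2 * n : ℕ) : ℝ) / (2 * (n:ℝ)) = 1 := by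
      push_cast; field_simp
    rw [hx]
    have hmem : (1:ℝ) ∈ Set.Icc ((K : ℝ) / (2 * n)) (((K : ℝ) + 1) / (2 * n)) := by
      constructor
      · rw [div_le_one hn']; rw [hcK]; linarith
      · rw [le_div_iff₀ hn']; rw [hcK]; linarith
    have := hL K (by omega) 1 hmem
    rw [this, hcK, heK]
    ring
  · have hmem : (k:ℝ) / (2 * (n:ℝ)) ∈ Set.Icc ((k : ℝ) / (2 * n)) (((k : ℝ) + 1) / (2 * n)) := by
      constructor
      · exact le_rfl
      · gcongr
        linarith

    have := hL k hk2 _ hmem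
    rw [this]
    have h0 : (2 * (n:ℝ)) * ((k:ℝ) / (2 * (n:ℝ))) - (k:ℝ) = 0 := by field_simp; ring
    rw [h0]
    ring

lemma tendsto_inv2n : Tendsto (fun n : ℕ => 1 / (2 * (n : ℝ))) atTop (nhds 0) := by
  have h := tendsto_one_div_atTop_nhds_zero_nat (𝕜 := ℝ)
  have : (fun n : ℕ => 1 / (2 * (n : ℝ))) = fun n : ℕ => (1 / (n:ℝ)) * (1/2) := by
    funext n; field_simp
  rw [this]
  simpa using h.mul_const (1/2 : ℝ)

set_option maxHeartbeats 2000000 in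
lemma extract_eventually
    (f : ℝ → ℝ) (hf : ContinuousOn f (Set.Icc 0 1))
    (ℓ : ℕ → ℕ → ℕ) (hℓ : ∀ n, 1 ≤ n → IsDyckPath n (ℓ n))
    (L : ℕ → ℝ → ℝ)
    (hL : ∀ n : ℕ, 1 ≤ n → ∀ k : ℕ, k < 2 * n → ∀ x : ℝ,
      x ∈ Set.Icc ((k : ℝ) / (2 * n)) (((k : ℝ) + 1) / (2 * n)) →
      L n x = (ℓ n k : ℝ) + ((2 * n : ℝ) * x - (k : ℝ)) * ((ℓ n (k + 1) : ℝ) - (ℓ n k : ℝ)))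
    (a : ℕ → ℝ) (ha : ∀ n, 0 < a n)
    (hconv : TendstoUniformlyOn (fun n x => a n * L n x) f Filter.atTop (Set.Icc 0 1))
    (hf0 : f 0 = 0)
    (p u v q T ρ : ℝ)
    (hp0 : 0 ≤ p) (hpu : p ≤ u) (huv : u < v) (hvq : v ≤ q) (hq1 : q ≤ 1)
    (hT : 0 < T) (hρ : 0 < ρ)
    (hfp : f p ≤ T - ρ/4) (hfq : f q ≤ T - ρ/4)
    (hbar : ∀ x, u ≤ x → x ≤ v → T + ρ/4 ≤ f x) :
    ∀ᶠ n in atTop, ∃ a' b' : ℕ,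
      a' % 2 = 0 ∧ b' % 2 = 0 ∧ a' ≤ b' ∧ b' < 2 * n ∧
      ℓ n a' = ℓ n b' ∧ (∀ k, a' < k → k < b' → ℓ n a' < ℓ n k) ∧
      p ≤ (a' : ℝ) / (2 * n) ∧ (a' : ℝ) / (2 * n) ≤ u ∧
      v ≤ (b' : ℝ) / (2 * n) ∧ (b' : ℝ) / (2 * n) ≤ q := by
  classical
  -- uniform approximation on grid points
  have approx : ∀ ε : ℝ, 0 < ε → ∀ᶠ n : ℕ in atTop, 1 ≤ n ∧
      ∀ k, k ≤ 2 * n → |a n * (ℓ n k : ℝ) - f ((k : ℝ) / (2 * (n:ℝ)))| ≤ ε := by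
    intro ε hε
    have h1 := Metric.tendstoUniformlyOn_iff.mp hconv ε hε
    filter_upwards [h1, eventually_ge_atTop 1] with n hn hn1
    refine ⟨hn1, fun k hk => ?_⟩
    have hn' : (0:ℝ) < 2 * n := by positivity
    have hx : (k:ℝ) / (2 * (n:ℝ)) ∈ Set.Icc (0:ℝ) 1 := by
      constructor
      · positivity
      · rw [div_le_one hn']
        exact_mod_cast hk
    have := hn _ hx
    rw [grid_value hn1 (hL n hn1) k hk] at this
    rw [abs_sub_comm]
    rw [Real.dist_eq] at this
    exact le_of_lt this
  -- continuity along sequences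
  have hcont : ∀ x₀ : ℝ, x₀ ∈ Set.Icc (0:ℝ) 1 → ∀ g : ℕ → ℝ,
      (∀ᶠ n : ℕ in atTop, g n ∈ Set.Icc (0:ℝ) 1) → Tendsto g atTop (nhds x₀) →
      ∀ ε : ℝ, 0 < ε → ∀ᶠ n : ℕ in atTop, f (g n) < f x₀ + ε := by
    intro x₀ hx₀ g hg hgt ε hε
    have h1 : Tendsto g atTop (nhdsWithin x₀ (Set.Icc 0 1)) :=
      tendsto_nhdsWithin_iff.2 ⟨hgt, hg⟩
    have h2 : Tendsto (fun n => f (g n)) atTop (nhds (f x₀)) :=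
      (hf.continuousWithinAt hx₀).tendsto.comp h1
    exact h2.eventually_lt_const (by linarith)
  have hq0 : 0 < q := lt_of_le_of_lt hp0 (lt_of_le_of_lt hpu (lt_of_lt_of_le huv hvq))
  have hp1 : p < 1 := lt_of_le_of_lt hpu (lt_of_lt_of_le huv (le_trans hvq hq1))
  -- sequences
  have hceilp : ∀ n : ℕ, 1 ≤ n → p ≤ (⌈2 * (n:ℝ) * p⌉₊ : ℝ) / (2 * n) ∧
      (⌈2 * (n:ℝ) * p⌉₊ : ℝ) / (2 * n) ≤ p + 1 / (2 * n) := by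
    intro n hn
    have hn' : (0:ℝ) < 2 * n := by positivity
    constructor
    · rw [le_div_iff₀ hn']
      have h1 : 2 * (n:ℝ) * p ≤ ⌈2 * (n:ℝ) * p⌉₊ := Nat.le_ceil _
      linarith
    · rw [div_le_iff₀ hn']
      have h1 := Nat.ceil_lt_add_one (a := 2 * (n:ℝ) * p) (by positivity)
      have h2 : (p + 1 / (2 * (n:ℝ))) * (2 * (n:ℝ)) = 2 * (n:ℝ) * p + 1 := by
        field_simp
      linarith
  have hfloorq : ∀ n : ℕ, 1 ≤ n → q - 1 / (2 * n) ≤ (⌊2 * (n:ℝ) * q⌋₊ : ℝ) / (2 * n) ∧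
      (⌊2 * (n:ℝ) * q⌋₊ : ℝ) / (2 * n) ≤ q := by
    intro n hn
    have hn' : (0:ℝ) < 2 * n := by positivity
    constructor
    · rw [le_div_iff₀ hn']
      have h1 := Nat.sub_one_lt_floor (2 * (n:ℝ) * q)
      have h2 : (q - 1 / (2 * (n:ℝ))) * (2 * (n:ℝ)) = 2 * (n:ℝ) * q - 1 := by
        field_simp
      linarith
    · rw [div_le_iff₀ hn']
      have h1 := Nat.floor_le (a := 2 * (n:ℝ) * q) (by positivity)
      linarith
  have htp : Tendsto (fun n : ℕ => (⌈2 * (n:ℝ) * p⌉₊ : ℝ) / (2 * n)) atTop (nhds p) := by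
    apply tendsto_of_tendsto_of_tendsto_of_le_of_le' tendsto_const_nhds
      (by simpa using tendsto_const_nhds.add tendsto_inv2n : Tendsto (fun n : ℕ => p + 1/(2*(n:ℝ))) atTop (nhds p))
    · filter_upwards [eventually_ge_atTop 1] with n hn using (hceilp n hn).1
    · filter_upwards [eventually_ge_atTop 1] with n hn using (hceilp n hn).2
  have htq : Tendsto (fun n : ℕ => (⌊2 * (n:ℝ) * q⌋₊ : ℝ) / (2 * n)) atTop (nhds q) := by
    apply tendsto_of_tendsto_of_tendsto_of_le_of_le'
      (by simpa using tendsto_const_nhds.sub tendsto_inv2n : Tendsto (fun n : ℕ => q - 1/(2*(n:ℝ))) atTop (nhds q))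
      tendsto_const_nhds
    · filter_upwards [eventually_ge_atTop 1] with n hn using (hfloorq n hn).1
    · filter_upwards [eventually_ge_atTop 1] with n hn using (hfloorq n hn).2
  have hsmall : ∀ c : ℝ, 0 < c → ∀ᶠ n : ℕ in atTop, 1 / (2 * (n:ℝ)) < c := by
    intro c hc
    exact tendsto_inv2n.eventually_lt_const hc
  have hmemp : ∀ᶠ n : ℕ in atTop, (⌈2 * (n:ℝ) * p⌉₊ : ℝ) / (2 * n) ∈ Set.Icc (0:ℝ) 1 := by
    filter_upwards [eventually_ge_atTop 1, hsmall (1 - p) (by linarith)] with n hn hn2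
    constructor
    · positivity
    · have := (hceilp n hn).2; linarith
  have hmemq : ∀ᶠ n : ℕ in atTop, (⌊2 * (n:ℝ) * q⌋₊ : ℝ) / (2 * n) ∈ Set.Icc (0:ℝ) 1 := by
    filter_upwards [eventually_ge_atTop 1] with n hn
    constructor
    · positivity
    · exact le_trans (hfloorq n hn).2 hq1
  have hmem0 : ∀ᶠ n : ℕ in atTop, ((1:ℕ) : ℝ) / (2 * (n:ℝ)) ∈ Set.Icc (0:ℝ) 1 := by
    filter_upwards [eventually_ge_atTop 1] with n hn
    have hn' : (1:ℝ) ≤ 2 * n := by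
      have : (1:ℝ) ≤ (n:ℝ) := by exact_mod_cast hn
      linarith
    constructor
    · positivity
    · rw [div_le_one (by linarith)]; push_cast; linarith
  have ht0 : Tendsto (fun n : ℕ => ((1:ℕ):ℝ) / (2 * (n:ℝ))) atTop (nhds 0) := by
    simpa using tendsto_inv2n
  -- collect all eventual facts
  filter_upwards [approx (ρ/64) (by linarith),
    hcont p ⟨hp0, le_of_lt hp1⟩ _ hmemp htp (ρ/32) (by linarith),
    hcont q ⟨le_of_lt hq0, hq1⟩ _ hmemq htq (ρ/32) (by linarith),
    hcont 0 ⟨le_rfl, by norm_num⟩ _ hmem0 ht0 (ρ/64) (by linarith),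
    hsmall (v - u) (by linarith)] with n happrox hfp' hfq' hf0' hgap
  obtain ⟨hn1, happ⟩ := happrox
  have hd := hℓ n hn1
  have hn' : (0:ℝ) < 2 * n := by positivity
  have hanpos := ha n
  -- a n is small
  have hn2 : 0 < 2 * n := by omega
  have hl1 : ℓ n 1 = 1 := by
    have h1 := hd.1
    have h2' := hd.2.2 0 hn2
    have h2 : ℓ n 1 = ℓ n 0 + 1 ∨ ℓ n 0 = ℓ n 1 + 1 := by simpa using h2'
    omega
  have han : a n ≤ ρ / 16 := by
    have h1 := happ 1 (by omega : 1 ≤ 2 * n)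
    rw [hl1] at h1
    rw [hf0] at hf0'
    have := abs_le.1 h1
    simp only [Nat.cast_one, mul_one] at this ⊢
    linarith [this.1, this.2, hf0']
  -- the level
  set h : ℕ := 2 * ⌈T / (2 * a n)⌉₊ with hhdef
  have hTle : T ≤ a n * h := by
    have h1 : T / (2 * a n) ≤ (⌈T / (2 * a n)⌉₊ : ℝ) := Nat.le_ceil _
    have h2 : (h:ℝ) = 2 * ⌈T / (2 * a n)⌉₊ := by push_cast [hhdef]; ring
    rw [h2]
    rw [div_le_iff₀ (by positivity)] at h1
    nlinarith
  have hTge : a n * h ≤ T + ρ/8 := by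
    have h1 := Nat.ceil_lt_add_one (a := T / (2 * a n)) (by positivity)
    have h2 : (h:ℝ) = 2 * ⌈T / (2 * a n)⌉₊ := by push_cast [hhdef]; ring
    rw [h2]
    rw [div_add' _ _ _ (by positivity)] at h1
    rw [lt_div_iff₀ (by positivity)] at h1
    nlinarith
  have hheven : h % 2 = 0 := by omega
  have hhpos : 1 ≤ h := by
    by_contra hcon
    have : h = 0 := by omega
    rw [this] at hTle
    simp at hTle
    linarith
  -- windows
  set K₁ : ℕ := ⌈2 * (n:ℝ) * u⌉₊ with hK₁
  set K₂ : ℕ := ⌊2 * (n:ℝ) * v⌋₊ with hK₂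
  set wa : ℕ := ⌈2 * (n:ℝ) * p⌉₊ with hwa
  set wb : ℕ := ⌊2 * (n:ℝ) * q⌋₊ with hwb
  have hwaK₁ : wa ≤ K₁ := Nat.ceil_le_ceil (by nlinarith)
  have hK₂wb : K₂ ≤ wb := Nat.floor_le_floor (by nlinarith)
  have hwb2n : wb ≤ 2 * n := by
    have h1 : (wb:ℝ) ≤ 2 * (n:ℝ) * q := Nat.floor_le (by positivity)
    have h2 : 2 * (n:ℝ) * q ≤ 2 * n := by nlinarith
    exact_mod_cast le_trans h1 h2
  have hK₁2n : K₁ ≤ 2 * n := by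
    rw [hK₁]
    refine Nat.ceil_le.2 ?_
    push_cast
    nlinarith [le_trans (le_of_lt huv) (le_trans hvq hq1)]
  have hK₁K₂ : K₁ ≤ K₂ := by
    refine Nat.ceil_le.2 ?_
    have h1 : 2 * (n:ℝ) * v - 1 < (K₂ : ℝ) := Nat.sub_one_lt_floor _
    have h2 : 1 / (2 * (n:ℝ)) < v - u := hgap
    rw [div_lt_iff₀ hn'] at h2
    nlinarith
  -- level at wa and wb
  have hposwa : (wa : ℝ) / (2 * n) ∈ Set.Icc p (p + 1/(2*(n:ℝ))) :=
    ⟨(hceilp n hn1).1, (hceilp n hn1).2⟩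
  have hlwa : ℓ n wa ≤ h := by
    have h1 := happ wa (le_trans hwaK₁ hK₁2n)
    have h2 : f ((wa:ℝ) / (2 * (n:ℝ))) < f p + ρ/32 := hfp'
    have h3 : a n * (ℓ n wa : ℝ) < T := by
      have := abs_le.1 h1
      linarith [this.1, this.2]
    have h4 : a n * (ℓ n wa : ℝ) < a n * h := lt_of_lt_of_le h3 hTle
    have h5 : (ℓ n wa : ℝ) < (h : ℝ) := by
      exact lt_of_mul_lt_mul_left h4 (le_of_lt hanpos)
    exact_mod_cast le_of_lt h5
  have hlwb : ℓ n wb ≤ h := by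
    have h1 := happ wb hwb2n
    have h2 : f ((wb:ℝ) / (2 * (n:ℝ))) < f q + ρ/32 := hfq'
    have h3 : a n * (ℓ n wb : ℝ) < T := by
      have := abs_le.1 h1
      linarith [this.1, this.2]
    have h4 : a n * (ℓ n wb : ℝ) < a n * h := lt_of_lt_of_le h3 hTle
    have h5 : (ℓ n wb : ℝ) < (h : ℝ) := lt_of_mul_lt_mul_left h4 (le_of_lt hanpos)
    exact_mod_cast le_of_lt h5
  -- barrier
  have hbarrier : ∀ k, K₁ ≤ k → k ≤ K₂ → h < ℓ n k := by
    intro k h1 h2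
    have hk2n : k ≤ 2 * n := le_trans h2 (le_trans hK₂wb hwb2n)
    have hpos1 : u ≤ (k:ℝ) / (2 * n) := by
      rw [le_div_iff₀ hn']
      have : 2 * (n:ℝ) * u ≤ (K₁:ℝ) := Nat.le_ceil _
      have hk : (K₁:ℝ) ≤ k := by exact_mod_cast h1
      linarith
    have hpos2 : (k:ℝ) / (2 * n) ≤ v := by
      rw [div_le_iff₀ hn']
      have h3 : (K₂:ℝ) ≤ 2 * (n:ℝ) * v := Nat.floor_le (mul_nonneg (by positivity) (by linarith))
      have hk : (k:ℝ) ≤ (K₂:ℝ) := by exact_mod_cast h2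
      linarith
    have hfk := hbar _ hpos1 hpos2
    have h1' := happ k hk2n
    have h3 : T + ρ/8 < a n * (ℓ n k : ℝ) := by
      have := abs_le.1 h1'
      linarith [this.1, this.2]
    have h4 : a n * (h : ℝ) < a n * ℓ n k := lt_of_le_of_lt hTge h3
    have h5 : (h:ℝ) < (ℓ n k : ℝ) := lt_of_mul_lt_mul_left h4 (le_of_lt hanpos)
    exact_mod_cast h5
  -- crossing
  obtain ⟨a', b', hwaa, haK₁, hK₂b, hbwb, hla, hlb, hinterior⟩ :=
    dyck_crossing hd h K₁ K₂ wa wb hwaK₁ hK₁K₂ hK₂wb hwb2n hlwa hlwb hbarrier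
  have ha2n : a' ≤ 2 * n := le_trans (le_of_lt haK₁) hK₁2n
  have hb2n : b' ≤ 2 * n := le_trans hbwb hwb2n
  have hpar_a : a' % 2 = 0 := by
    have := dyck_parity hd a' ha2n
    omega
  have hpar_b : b' % 2 = 0 := by
    have := dyck_parity hd b' hb2n
    omega
  have hblt : b' < 2 * n := by
    rcases eq_or_lt_of_le hb2n with h' | h'
    · exfalso
      have := hd.2.1 (2*n) le_rfl
      rw [h'] at hlb
      omega
    · exact h'
  refine ⟨a', b', hpar_a, hpar_b, by omega, hblt, by rw [hla, hlb], ?_, ?_, ?_, ?_, ?_⟩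
  · intro k hk1 hk2; rw [hla]; exact hinterior k hk1 hk2
  · rw [le_div_iff₀ hn']
    have h1 : 2 * (n:ℝ) * p ≤ (wa:ℝ) := Nat.le_ceil _
    have h2 : (wa:ℝ) ≤ a' := by exact_mod_cast hwaa
    linarith
  · rw [div_le_iff₀ hn']
    have h1 : (K₁:ℝ) < 2 * (n:ℝ) * u + 1 := Nat.ceil_lt_add_one (mul_nonneg (by positivity) (by linarith))
    have h2 : (a':ℝ) + 1 ≤ (K₁:ℝ) := by exact_mod_cast haK₁
    linarith
  · rw [le_div_iff₀ hn']
    have h1 : 2 * (n:ℝ) * v - 1 < (K₂:ℝ) := Nat.sub_one_lt_floor _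
    have h2 : (K₂:ℝ) + 1 ≤ (b':ℝ) := by exact_mod_cast hK₂b
    linarith
  · rw [div_le_iff₀ hn']
    have h1 : (wb:ℝ) ≤ 2 * (n:ℝ) * q := Nat.floor_le (by positivity)
    have h2 : (b':ℝ) ≤ (wb:ℝ) := by exact_mod_cast hbwb
    linarith


open Real

lemma vtx_half {n a' : ℕ} (h2 : a' % 2 = 0) (hn : 1 ≤ n) :
    vtx n (a' / 2) = circlePt ((a' : ℝ) / (2 * (n:ℝ))) := by
  rw [vtx_eq_circlePt]
  congr 1
  have hne : (n:ℝ) ≠ 0 := by positivity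
  obtain ⟨c, rfl⟩ : ∃ c, a' = 2 * c := ⟨a' / 2, by omega⟩
  rw [Nat.mul_div_cancel_left c (by norm_num)]
  push_cast
  field_simp

lemma point_bound {n : ℕ} {Q : Set (Set ℕ)} (hpart : IsPartitionOf n Q)
    (hn : 1 ≤ n) (hpi : 2 * π * (1 / (n:ℝ)) ≤ 1) {x : ℝ} (hx : x ∈ Set.Icc (0:ℝ) 1) :
    Metric.infDist (circlePt x) (lamination n Q) ≤ 4 * π / n := by
  have hn' : (0:ℝ) < n := by
    have : (1:ℝ) ≤ n := by exact_mod_cast hn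
    linarith
  set k : ℕ := min ⌊(n:ℝ) * x⌋₊ (n - 1) with hk
  have hkn : k < n := by omega
  have key : |(n:ℝ) * x - k| ≤ 1 := by
    rcases le_or_gt ⌊(n:ℝ) * x⌋₊ (n-1) with hc | hc
    · have hke : k = ⌊(n:ℝ) * x⌋₊ := by omega
      have hnx : 0 ≤ (n:ℝ) * x := mul_nonneg hn'.le hx.1
      have h1 : (k:ℝ) ≤ (n:ℝ) * x := hke ▸ Nat.floor_le hnx
      have h2 : (n:ℝ) * x - 1 < (k:ℝ) := hke ▸ Nat.sub_one_lt_floor _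
      rw [abs_le]
      constructor <;> linarith
    · have hke : k = n - 1 := by omega
      have hnx : (n:ℝ) ≤ (n:ℝ) * x := by
        have h0 := (Nat.le_floor_iff (mul_nonneg hn'.le hx.1)).1 (by omega : n ≤ ⌊(n:ℝ)*x⌋₊)
        exact_mod_cast h0
      have hx1 : x = 1 := le_antisymm hx.2 (by nlinarith)
      have hkc : (k:ℝ) = (n:ℝ) - 1 := by
        rw [hke, Nat.cast_sub hn, Nat.cast_one]
      rw [hx1, hkc]
      simp
  have hxk : |x - (k:ℝ)/n| ≤ 1/n := by
    have heq : x - (k:ℝ)/n = ((n:ℝ)*x - k)/n := by field_simp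
    rw [heq, abs_div, abs_of_pos hn']
    gcongr
  have hvk : vtx n k ∈ lamination n Q := vertex_mem_lamination hpart hkn
  refine le_trans (Metric.infDist_le_dist_of_mem hvk) ?_
  rw [vtx_eq_circlePt]
  have hlip := circlePt_dist x ((k:ℝ)/n) ?_
  · calc dist (circlePt x) (circlePt ((k:ℝ)/n)) ≤ 4*π*|x - (k:ℝ)/n| := hlip
      _ ≤ 4*π*(1/n) := by gcongr
      _ = 4*π/n := by ring
  · calc 2*π*|x - (k:ℝ)/n| ≤ 2*π*(1/n) := by gcongr
      _ ≤ 1 := hpi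


set_option maxHeartbeats 2000000 in
lemma main_aux (f : ℝ → ℝ) (hf : ContinuousOn f (Set.Icc 0 1))
    (hf0 : f 0 = 0) (hf1 : f 1 = 0) (hfpos : ∀ r : ℝ, 0 < r → r < 1 → 0 < f r)
    (hmin : ∀ s t : ℝ, s ∈ Set.Ioo (0 : ℝ) 1 → t ∈ Set.Ioo (0 : ℝ) 1 → s ≠ t →
      IsLocalMinOn f (Set.Icc 0 1) s → IsLocalMinOn f (Set.Icc 0 1) t → f s ≠ f t)
    (Q : ℕ → Set (Set ℕ))
    (ℓ : ℕ → ℕ → ℕ)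
    (hℓ : ∀ n, 1 ≤ n → IsDyckPath n (ℓ n) ∧ dyckEvenClasses n (ℓ n) = Q n)
    (L : ℕ → ℝ → ℝ)
    (hL : ∀ n : ℕ, 1 ≤ n → ∀ k : ℕ, k < 2 * n → ∀ x : ℝ,
      x ∈ Set.Icc ((k : ℝ) / (2 * n)) (((k : ℝ) + 1) / (2 * n)) →
      L n x = (ℓ n k : ℝ) + ((2 * n : ℝ) * x - (k : ℝ)) * ((ℓ n (k + 1) : ℝ) - (ℓ n k : ℝ)))
    (a : ℕ → ℝ) (ha : ∀ n, 0 < a n)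
    (hconv : TendstoUniformlyOn (fun n x => a n * L n x) f Filter.atTop (Set.Icc 0 1))
    (s t : ℝ) (hs : s ∈ Set.Icc (0 : ℝ) 1) (ht : t ∈ Set.Icc (0 : ℝ) 1)
    (hst : simRel f s t) (hlt : s < t) (hm : 0 < f s) :
    ∀ ε : ℝ, 0 < ε → ∀ᶠ n in Filter.atTop, ∀ z ∈ segment ℝ (circlePt s) (circlePt t),
      Metric.infDist z (lamination n (Q n)) ≤ ε := by
  classical
  intro ε hε
  have hπ := Real.pi_pos
  have hs0 : 0 < s := by
    rcases eq_or_lt_of_le hs.1 with h | h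
    · exfalso; rw [← h, hf0] at hm; exact lt_irrefl _ hm
    · exact h
  have ht1 : t < 1 := by
    rcases eq_or_lt_of_le ht.2 with h | h
    · exfalso
      have hm' := hm
      rw [hst.1, h, hf1] at hm'
      exact lt_irrefl _ hm'
    · exact h
  have hfmin : ∀ r, s ≤ r → r ≤ t → f s ≤ f r := by
    intro r h1 h2
    refine hst.2 r ?_ ?_
    · rw [min_eq_left hlt.le]; exact h1
    · rw [max_eq_right hlt.le]; exact h2
  have hfnn : ∀ x, x ∈ Set.Icc (0:ℝ) 1 → 0 ≤ f x := by
    intro x hx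
    rcases eq_or_lt_of_le hx.1 with h | h
    · rw [← h, hf0]
    rcases eq_or_lt_of_le hx.2 with h' | h'
    · rw [h', hf1]
    · exact (hfpos x h h').le
  set m := f s with hmdef
  have hfst : m = f t := hst.1
  set δ := min (min (ε/(16*π+1)) ((t-s)/4)) (1/(8*π+1)) with hδdef
  have hδpos : 0 < δ := lt_min (lt_min (by positivity) (by linarith)) (by positivity)
  have hδ1 : δ ≤ ε/(16*π+1) := le_trans (min_le_left _ _) (min_le_left _ _)
  have hδ2 : δ ≤ (t-s)/4 := le_trans (min_le_left _ _) (min_le_right _ _)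
  have hδ3 : δ ≤ 1/(8*π+1) := min_le_right _ _
  suffices hKEY : ∀ᶠ n : ℕ in Filter.atTop, 1 ≤ n ∧ ∃ a' b' : ℕ,
      a' % 2 = 0 ∧ b' % 2 = 0 ∧ a' ≤ b' ∧ b' < 2 * n ∧
      ℓ n a' = ℓ n b' ∧ (∀ k, a' < k → k < b' → ℓ n a' < ℓ n k) ∧
      |(a' : ℝ)/(2*(n:ℝ)) - s| ≤ δ ∧ |(b' : ℝ)/(2*(n:ℝ)) - t| ≤ δ by
    filter_upwards [hKEY] with n hn
    obtain ⟨hn1, a', b', h2a, h2b, hab, hblt, heqℓ, hint, hpa, hpb⟩ := hn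
    intro z hz
    have hsub := edge_sub_lamination (hℓ n hn1).2 h2a h2b hab hblt heqℓ hint
    obtain ⟨c, d, hc, hd, hcd, rfl⟩ := hz
    have hz' : c • vtx n (a'/2) + d • vtx n (b'/2) ∈ lamination n (Q n) :=
      hsub ⟨c, d, hc, hd, hcd, rfl⟩
    refine le_trans (Metric.infDist_le_dist_of_mem hz') ?_
    have hb4 : 4*π*δ ≤ ε := by
      have h1 : 4*π*δ ≤ 4*π*(ε/(16*π+1)) := by gcongr
      have h2 : 4*π*(ε/(16*π+1)) ≤ ε := by
        rw [mul_div_assoc', div_le_iff₀ (by positivity)]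
        nlinarith
      linarith
    have hlip : ∀ (x : ℝ) (j : ℕ), j % 2 = 0 → |(j:ℝ)/(2*(n:ℝ)) - x| ≤ δ →
        dist (circlePt x) (vtx n (j/2)) ≤ 4*π*δ := by
      intro x j hj hdist
      rw [vtx_half hj hn1]
      have hdist' : |x - (j:ℝ)/(2*(n:ℝ))| ≤ δ := by rwa [abs_sub_comm]
      have h1 : 2*π*|x - (j:ℝ)/(2*(n:ℝ))| ≤ 1 := by
        calc 2*π*|x - (j:ℝ)/(2*(n:ℝ))| ≤ 2*π*δ := by gcongr
          _ ≤ 2*π*(1/(8*π+1)) := by gcongr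
          _ ≤ 1 := by
            rw [mul_one_div, div_le_one (by positivity)]
            linarith
      calc dist (circlePt x) (circlePt ((j:ℝ)/(2*(n:ℝ))))
          ≤ 4*π*|x - (j:ℝ)/(2*(n:ℝ))| := circlePt_dist _ _ h1
        _ ≤ 4*π*δ := by gcongr
    have hd1 := hlip s a' h2a hpa
    have hd2 := hlip t b' h2b hpb
    have hsplit : dist (c • circlePt s + d • circlePt t)
        (c • vtx n (a'/2) + d • vtx n (b'/2))
        ≤ c * dist (circlePt s) (vtx n (a'/2)) + d * dist (circlePt t) (vtx n (b'/2)) := by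
      rw [dist_eq_norm, dist_eq_norm, dist_eq_norm]
      have heq2 : c • circlePt s + d • circlePt t - (c • vtx n (a'/2) + d • vtx n (b'/2))
          = c • (circlePt s - vtx n (a'/2)) + d • (circlePt t - vtx n (b'/2)) := by
        rw [smul_sub, smul_sub]; abel
      rw [heq2]
      refine le_trans (norm_add_le _ _) ?_
      rw [norm_smul, norm_smul, Real.norm_of_nonneg hc, Real.norm_of_nonneg hd]
    refine le_trans hsplit (le_trans ?_ hb4)
    calc c * dist (circlePt s) (vtx n (a'/2)) + d * dist (circlePt t) (vtx n (b'/2))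
        ≤ c * (4*π*δ) + d * (4*π*δ) := by gcongr
      _ = 4*π*δ := by rw [← add_mul, hcd, one_mul]
  by_cases hmid : ∃ r, s < r ∧ r < t ∧ f r = m
  · -- Case A : there is a middle point of the class inside (s,t)
    obtain ⟨r, hr1, hr2, hr3⟩ := hmid
    have hrloc : IsLocalMinOn f (Set.Icc 0 1) r := by
      have hU : Set.Ioo s t ∈ nhdsWithin r (Set.Icc 0 1) :=
        mem_nhdsWithin_of_mem_nhds (Ioo_mem_nhds hr1 hr2)
      have hev : ∀ᶠ x in nhdsWithin r (Set.Icc 0 1), f r ≤ f x := by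
        filter_upwards [hU] with x hx
        rw [hr3]; exact hfmin x hx.1.le hx.2.le
      exact hev
    have halpha : ∃ w, w ∈ Set.Icc (0:ℝ) 1 ∧ s - δ < w ∧ w < s ∧ f w < m := by
      by_contra hcon
      push_neg at hcon
      have hsloc : IsLocalMinOn f (Set.Icc 0 1) s := by
        have hU : Set.Ioo (s - δ) t ∈ nhdsWithin s (Set.Icc 0 1) :=
          mem_nhdsWithin_of_mem_nhds (Ioo_mem_nhds (by linarith) hlt)
        have hev : ∀ᶠ x in nhdsWithin s (Set.Icc 0 1), f s ≤ f x := by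
          filter_upwards [hU, self_mem_nhdsWithin] with x hx hxI
          rcases lt_or_ge x s with h | h
          · exact hcon x hxI hx.1 h
          · exact hfmin x h hx.2.le
        exact hev
      exact absurd (show f s = f r by rw [hr3])
        (hmin s r ⟨hs0, lt_trans hlt ht1⟩ ⟨lt_trans hs0 hr1, lt_trans hr2 ht1⟩
          (ne_of_lt hr1) hsloc hrloc)
    have hbeta : ∃ q', q' ∈ Set.Icc (0:ℝ) 1 ∧ t < q' ∧ q' < t + δ ∧ f q' < m := by
      by_contra hcon
      push_neg at hcon
      have htloc : IsLocalMinOn f (Set.Icc 0 1) t := by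
        have hU : Set.Ioo s (t + δ) ∈ nhdsWithin t (Set.Icc 0 1) :=
          mem_nhdsWithin_of_mem_nhds (Ioo_mem_nhds hlt (by linarith))
        have hev : ∀ᶠ x in nhdsWithin t (Set.Icc 0 1), f t ≤ f x := by
          filter_upwards [hU, self_mem_nhdsWithin] with x hx hxI
          rw [← hst.1]
          rcases le_or_gt x t with h | h
          · exact hfmin x hx.1.le h
          · exact hcon x hxI h hx.2
        exact hev
      exact absurd (show f r = f t by rw [hr3]; exact hfst)
        (hmin r t ⟨lt_trans hs0 hr1, lt_trans hr2 ht1⟩ ⟨lt_trans hs0 hlt, ht1⟩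
          (ne_of_lt hr2) hrloc htloc)
    obtain ⟨w, hwI, hw1, hw2, hw3⟩ := halpha
    obtain ⟨q', hqI, hq1', hq2', hq3'⟩ := hbeta
    set ρ := min (m - f w) (m - f q') with hρdef
    have hρ1 : ρ ≤ m - f w := min_le_left _ _
    have hρ2 : ρ ≤ m - f q' := min_le_right _ _
    have hρpos : 0 < ρ := lt_min (by linarith) (by linarith)
    have hρm : ρ ≤ m := by linarith [hfnn w hwI]
    have hext := extract_eventually f hf ℓ (fun n hn => (hℓ n hn).1) L hL a ha hconv hf0
      w s t q' (m - ρ/2) ρ hwI.1 hw2.le hlt hq1'.le hqI.2 (by linarith) hρpos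
      (by linarith) (by linarith)
      (by intro x h1 h2; have := hfmin x h1 h2; linarith)
    filter_upwards [hext, Filter.eventually_ge_atTop 1] with n hn hn1
    obtain ⟨a', b', e1, e2, e3, e4, e5, e6, e7, e8, e9, e10⟩ := hn
    refine ⟨hn1, a', b', e1, e2, e3, e4, e5, e6, ?_, ?_⟩
    · rw [abs_le]; constructor <;> linarith
    · rw [abs_le]; constructor <;> linarith
  · -- Case B : f > m on (s,t)
    have hgt2 : ∀ r, s < r → r < t → m < f r := by
      intro r h1 h2
      rcases lt_or_eq_of_le (hfmin r h1.le h2.le) with h | h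
      · exact h
      · exact absurd ⟨r, h1, h2, h.symm⟩ hmid
    have hne : s + δ/2 ≤ t - δ/2 := by linarith
    have hsub1 : Set.Icc (s + δ/2) (t - δ/2) ⊆ Set.Icc (0:ℝ) 1 :=
      Set.Icc_subset_Icc (by linarith [hs.1]) (by linarith [ht.2])
    obtain ⟨u₀, hu₀I, hu₀min⟩ :=
      isCompact_Icc.exists_isMinOn (Set.nonempty_Icc.2 hne) (hf.mono hsub1)
    set ρ := f u₀ - m with hρdef
    have hρpos : 0 < ρ := by
      have := hgt2 u₀ (by linarith [hu₀I.1]) (by linarith [hu₀I.2])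
      linarith
    have hext := extract_eventually f hf ℓ (fun n hn => (hℓ n hn).1) L hL a ha hconv hf0
      s (s + δ/2) (t - δ/2) t (m + ρ/2) ρ hs.1 (by linarith) (by linarith) (by linarith)
      ht.2 (by linarith) hρpos (by linarith)
      (by rw [← hst.1]; linarith)
      (by intro x h1 h2
          have := isMinOn_iff.1 hu₀min x ⟨h1, h2⟩
          linarith)
    filter_upwards [hext, Filter.eventually_ge_atTop 1] with n hn hn1
    obtain ⟨a', b', e1, e2, e3, e4, e5, e6, e7, e8, e9, e10⟩ := hn
    refine ⟨hn1, a', b', e1, e2, e3, e4, e5, e6, ?_, ?_⟩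
    · rw [abs_le]; constructor <;> linarith
    · rw [abs_le]; constructor <;> linarith

/-- Let `f : [0,1] → ℝ` be a continuous excursion, positive on `(0,1)`,
taking distinct values at distinct local minimum points of `(0,1)`. Let `Q_n` be noncrossing
partitions of `{0, …, n-1}` with encoding Dyck paths `ℓ^n` and piecewise-linear
interpolations `L_n`, and suppose `a_n · L_n → f` uniformly on `[0,1]` for some positive
reals `a_n`. Then for all `s ∼_f t`, the supremum over `z ∈ [e^{2πis}, e^{2πit}]` of the
distance from `z` to `Λ_n(Q_n)` tends to `0`. -/
theorem chords_approximated (f : ℝ → ℝ) (hf : ContinuousOn f (Set.Icc 0 1))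
    (hf0 : f 0 = 0) (hf1 : f 1 = 0) (hfpos : ∀ r : ℝ, 0 < r → r < 1 → 0 < f r)
    (hmin : ∀ s t : ℝ, s ∈ Set.Ioo (0 : ℝ) 1 → t ∈ Set.Ioo (0 : ℝ) 1 → s ≠ t →
      IsLocalMinOn f (Set.Icc 0 1) s → IsLocalMinOn f (Set.Icc 0 1) t → f s ≠ f t)
    (Q : ℕ → Set (Set ℕ)) (hQ : ∀ n, 1 ≤ n → IsNCPartition n (Q n))
    (ℓ : ℕ → ℕ → ℕ)
    (hℓ : ∀ n, 1 ≤ n → IsDyckPath n (ℓ n) ∧ dyckEvenClasses n (ℓ n) = Q n)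
    (L : ℕ → ℝ → ℝ)
    (hL : ∀ n : ℕ, 1 ≤ n → ∀ k : ℕ, k < 2 * n → ∀ x : ℝ,
      x ∈ Set.Icc ((k : ℝ) / (2 * n)) (((k : ℝ) + 1) / (2 * n)) →
      L n x = (ℓ n k : ℝ) + ((2 * n : ℝ) * x - (k : ℝ)) * ((ℓ n (k + 1) : ℝ) - (ℓ n k : ℝ)))
    (a : ℕ → ℝ) (ha : ∀ n, 0 < a n)
    (hconv : TendstoUniformlyOn (fun n x => a n * L n x) f Filter.atTop (Set.Icc 0 1))
    (s t : ℝ) (hs : s ∈ Set.Icc (0 : ℝ) 1) (ht : t ∈ Set.Icc (0 : ℝ) 1)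
    (hst : simRel f s t) :
    Filter.Tendsto
      (fun n => ⨆ z : (segment ℝ (circlePt s) (circlePt t) : Set ℂ),
        Metric.infDist (z : ℂ) (lamination n (Q n)))
      Filter.atTop (nhds 0) := by
  classical
  have hπ := Real.pi_pos
  rw [NormedAddCommGroup.tendsto_nhds_zero]
  intro ε hε
  suffices key : ∀ᶠ n : ℕ in Filter.atTop, ∀ z ∈ segment ℝ (circlePt s) (circlePt t),
      Metric.infDist z (lamination n (Q n)) ≤ ε/2 by
    filter_upwards [key] with n hn
    have h0 : 0 ≤ ⨆ z : (segment ℝ (circlePt s) (circlePt t) : Set ℂ),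
        Metric.infDist (z : ℂ) (lamination n (Q n)) :=
      Real.iSup_nonneg (fun z => Metric.infDist_nonneg)
    have h1 : (⨆ z : (segment ℝ (circlePt s) (circlePt t) : Set ℂ),
        Metric.infDist (z : ℂ) (lamination n (Q n))) ≤ ε/2 :=
      Real.iSup_le (fun z => hn z z.2) (by linarith)
    rw [Real.norm_eq_abs, abs_of_nonneg h0]
    linarith
  by_cases hpt : circlePt s = circlePt t
  · -- degenerate chord : a single point
    have h4π : Filter.Tendsto (fun n : ℕ => 4*π*(1/(n:ℝ))) Filter.atTop (nhds 0) := by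
      simpa using tendsto_one_div_atTop_nhds_zero_nat.const_mul (4*π)
    filter_upwards [Filter.eventually_ge_atTop 1,
      h4π.eventually_lt_const (show (0:ℝ) < ε/2 by linarith),
      h4π.eventually_lt_const (show (0:ℝ) < 1 by norm_num)] with n hn1 hn2 hn3
    intro z hz
    rw [hpt, segment_same] at hz
    rw [Set.mem_singleton_iff] at hz
    subst hz
    have hpi1 : 2*π*(1/(n:ℝ)) ≤ 1 := by
      have h2 : 0 ≤ π*(1/(n:ℝ)) := by positivity
      linarith
    have := point_bound (hQ n hn1).1 hn1 hpi1 ht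
    have heq4 : 4*π/(n:ℝ) = 4*π*(1/(n:ℝ)) := by ring
    rw [heq4] at this
    linarith
  · have hstne : s ≠ t := fun h => hpt (by rw [h])
    have hfnn : ∀ x, x ∈ Set.Icc (0:ℝ) 1 → 0 ≤ f x := by
      intro x hx
      rcases eq_or_lt_of_le hx.1 with h | h
      · rw [← h, hf0]
      rcases eq_or_lt_of_le hx.2 with h' | h'
      · rw [h', hf1]
      · exact (hfpos x h h').le
    have hm : 0 < f s := by
      rcases eq_or_lt_of_le (hfnn s hs) with h | h
      · exfalso
        have hft : f t = 0 := by rw [← hst.1, ← h]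
        have hs01 : s = 0 ∨ s = 1 := by
          by_contra hc
          push_neg at hc
          have := hfpos s (lt_of_le_of_ne hs.1 (Ne.symm hc.1)) (lt_of_le_of_ne hs.2 hc.2)
          rw [← h] at this
          exact lt_irrefl _ this
        have ht01 : t = 0 ∨ t = 1 := by
          by_contra hc
          push_neg at hc
          have := hfpos t (lt_of_le_of_ne ht.1 (Ne.symm hc.1)) (lt_of_le_of_ne ht.2 hc.2)
          rw [hft] at this
          exact lt_irrefl _ this
        have hc01 : circlePt (0:ℝ) = circlePt 1 := by
          unfold circlePt
          rw [show (2:ℂ) * (Real.pi:ℂ) * Complex.I * (0:ℝ) = 0 by push_cast; ring,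
            show (2:ℂ) * (Real.pi:ℂ) * Complex.I * (1:ℝ) = 2 * (Real.pi:ℂ) * Complex.I by push_cast; ring,
            Complex.exp_zero, Complex.exp_two_pi_mul_I]
        rcases hs01 with h1 | h1 <;> rcases ht01 with h2 | h2
        · exact hstne (h1.trans h2.symm)
        · exact hpt (by rw [h1, h2, hc01])
        · exact hpt (by rw [h1, h2, hc01])
        · exact hstne (h1.trans h2.symm)
      · exact h
    rcases lt_trichotomy s t with hlt | heq | hgt
    · exact main_aux f hf hf0 hf1 hfpos hmin Q ℓ hℓ L hL a ha hconv s t hs ht hst hlt hm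
        (ε/2) (by linarith)
    · exact absurd (by rw [heq]) hpt
    · have hst' : simRel f t s := by
        refine ⟨hst.1.symm, fun r h1 h2 => ?_⟩
        rw [← hst.1]
        exact hst.2 r (by rwa [min_comm] at h1) (by rwa [max_comm] at h2)
      have hm' : 0 < f t := by rw [← hst.1]; exact hm
      have := main_aux f hf hf0 hf1 hfpos hmin Q ℓ hℓ L hL a ha hconv t s ht hs hst' hgt hm'
        (ε/2) (by linarith)
      filter_upwards [this] with n hn z hz
      exact hn z (by rwa [segment_symm] at hz)
end
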